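/- arXiv:1712.08989 — 11 statements merged into one kernel-verified Lean document; each statement's English description precedes it below -/
import Mathlib

section
/- Let n ≥ 3 be an integer and 0 ≤ k ≤ n−2. Let α_1,…,α_n be real numbers with α_{k+1} < α_i < α_n for every i ∈ {1,…,n−1}\{k+1}. Define (n−1)-tuples z and w of positive reals by z_p = α_{⟨k+1−p⟩} − α_{k+1} (where ⟨m⟩ denotes the representative of m modulo n in {1,…,n}) for p = 1,…,n−1, and w_p = α_n − α_p for p = 1,…,n−1. Then the map φ(n,k) sends (z,w) to (w,z); that is, the output state y′ defined by y′_j = w_j·(z_{⟨k+2−j⟩}+w_{⟨j−1⟩})/(z_{⟨k+1−j⟩}+w_j) equals w componentwise, and the output carrier z′ defined by z′_j = z_j·(z_{⟨j+1⟩}+w_{⟨k−j⟩})/(z_j+w_{⟨k+1−j⟩}) equals z componentwise (with the convention z_n = w_n = 0). In other words, (w,z) is a commuting pair (vacuum state and initial carrier) for φ(n,k). -/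
/-!
Extend `z` and `w` to the index `0` by the same formulas (both give `0` there). Then every sum
`z p + w q` with `p + q = k + 1` telescopes to `α 0 - α (k + 1)`, and the four sums in `φ(n,k)`
are of this form, so each quotient is `1`. The common value is nonzero because `n ≥ 3` leaves an
index `i ∉ {0, k + 1}`, and `α (k + 1) < α i < α 0`.
-/

lemma ZMod.exists_ne_ne {n : ℕ} (hn : 3 ≤ n) (a b : ZMod n) : ∃ i, i ≠ a ∧ i ≠ b := by
  have : NeZero n := ⟨by omega⟩
  exact ENat.exists_ne_ne_of_three_le (by simpa using hn) a b

section Telescoping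

variable {G : Type*} [AddCommGroup G] {α z w : G → ℝ} {K : G}

lemma add_eq_sub_of_add_eq (hz : ∀ p, z p = α (K - p) - α K) (hw : ∀ p, w p = α 0 - α p)
    {p q : G} (hpq : p + q = K) : z p + w q = α 0 - α K := by
  rw [hz, hw, ← hpq, add_sub_cancel_left]
  ring

end Telescoping

theorem stmt_0_general (n k : ℕ) (hn : 3 ≤ n)
    (α : ZMod n → ℝ)
    (hα : ∀ i : ZMod n, i ≠ 0 → i ≠ ((k + 1 : ℕ) : ZMod n) →
      α ((k + 1 : ℕ) : ZMod n) < α i ∧ α i < α 0)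
    (z w : ZMod n → ℝ)
    (hz0 : z 0 = 0) (hw0 : w 0 = 0)
    (hz : ∀ p : ZMod n, p ≠ 0 →
      z p = α (((k + 1 : ℕ) : ZMod n) - p) - α ((k + 1 : ℕ) : ZMod n))
    (hw : ∀ p : ZMod n, p ≠ 0 → w p = α 0 - α p) :
    ∀ j : ZMod n, j ≠ 0 →
      w j * (z (((k + 2 : ℕ) : ZMod n) - j) + w (j - 1)) /
          (z (((k + 1 : ℕ) : ZMod n) - j) + w j) = w j ∧
      z j * (z (j + 1) + w (((k : ℕ) : ZMod n) - j)) /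
          (z j + w (((k + 1 : ℕ) : ZMod n) - j)) = z j := by
  set K : ZMod n := ((k + 1 : ℕ) : ZMod n)
  have hz' (p : ZMod n) : z p = α (K - p) - α K := by
    rcases eq_or_ne p 0 with rfl | hp
    · simp [hz0]
    · exact hz p hp
  have hw' (p : ZMod n) : w p = α 0 - α p := by
    rcases eq_or_ne p 0 with rfl | hp
    · simp [hw0]
    · exact hw p hp
  have hsum {p q : ZMod n} (hpq : p + q = K) := add_eq_sub_of_add_eq hz' hw' hpq
  have hgap : α 0 - α K ≠ 0 := by
    obtain ⟨i, hi0, hiK⟩ := ZMod.exists_ne_ne hn 0 K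
    have := hα i hi0 hiK
    linarith
  intro j _
  constructor
  · rw [hsum (q := j - 1) (by push_cast [K]; ring), hsum (q := j) (by ring),
      mul_div_cancel_right₀ _ hgap]
  · rw [hsum (q := k - j) (by push_cast [K]; ring), hsum (q := K - j) (by ring),
      mul_div_cancel_right₀ _ hgap]

/-- The commuting pair (vacuum state `w`, initial carrier `z`) for `φ(n,k)`.
Tuples of length `n-1` are modelled as functions on `ZMod n`, with the index class `0`
corresponding to the subscript `n` (the convention `z_n = w_n = 0`), and the entries
for subscripts `1,…,n-1` given on the nonzero classes. -/
theorem stmt_0 (n k : ℕ) (hn : 3 ≤ n) (hk : k ≤ n - 2)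
    (α : ZMod n → ℝ)
    (hα : ∀ i : ZMod n, i ≠ 0 → i ≠ ((k + 1 : ℕ) : ZMod n) →
      α ((k + 1 : ℕ) : ZMod n) < α i ∧ α i < α 0)
    (z w : ZMod n → ℝ)
    (hz0 : z 0 = 0) (hw0 : w 0 = 0)
    (hz : ∀ p : ZMod n, p ≠ 0 →
      z p = α (((k + 1 : ℕ) : ZMod n) - p) - α ((k + 1 : ℕ) : ZMod n))
    (hw : ∀ p : ZMod n, p ≠ 0 → w p = α 0 - α p) :
    ∀ j : ZMod n, j ≠ 0 →
      w j * (z (((k + 2 : ℕ) : ZMod n) - j) + w (j - 1)) /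
          (z (((k + 1 : ℕ) : ZMod n) - j) + w j) = w j ∧
      z j * (z (j + 1) + w (((k : ℕ) : ZMod n) - j)) /
          (z j + w (((k + 1 : ℕ) : ZMod n) - j)) = z j :=
  stmt_0_general n k hn α hα z w hz0 hw0 hz hw
end

section
/- Let n ≥ 3 be an integer and 0 ≤ k ≤ n−2. Let A_1,…,A_n be real numbers with A_{k+1} > A_i > A_n for every i ∈ {1,…,n−1}\{k+1}. Define the (n−1)-tuples Z = (A_k, A_{k−1}, …, A_1, A_n, A_{n−1}, …, A_{k+2}) (i.e. Z_p = A_{⟨k+1−p⟩} where ⟨m⟩ is the representative of m modulo n in {1,…,n}) and W = (A_n, A_n, …, A_n). Then the tropical map Φ(n,k) sends (Z,W) to (W,Z): the output state Y′ defined by Y′_j = W_j + min(Z_{k+2−j}, W_{j−1}) − min(Z_{k+1−j}, W_j) equals W componentwise, and the output carrier Z′ defined by Z′_j = Z_j + min(Z_{j+1}, W_{k−j}) − min(Z_j, W_{k+1−j}) equals Z componentwise (with subscripts modulo n and the convention Z_n = W_n = +∞, meaning such terms are omitted from the minima). That is, (W,Z) is a tropical commuting pair for Φ(n,k). -/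
/-!
Since `A_n` is the strict minimum of the `A_i` away from `A_{k+1}`, every carrier entry is at
least `A_n`, and it equals `A_n` at index `k+1`. The vacuum `W` equals `A_n` off the index `n`,
so each of the four minima in `Φ(n,k)` is `A_n`: either its `W`-term is `A_n`, or that term is
`+∞` and its `Z`-term is `Z_{k+1} = A_n`. The two corrections then cancel.
-/

lemma min_eq_of_forall_le_of_top {ι α : Type*} [Zero ι] [LinearOrder α] [OrderTop α]
    {Z W : ι → α} {a : α} {c : ι} (hZ : ∀ p, a ≤ Z p) (hZc : Z c = a)
    (hW0 : W 0 = ⊤) (hW : ∀ q, q ≠ 0 → W q = a) (p q : ι) (hpq : q = 0 → p = c) :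
    min (Z p) (W q) = a := by
  by_cases hq : q = 0
  · rw [hq, hW0, hpq hq, hZc, min_top_right]
  · rw [hW q hq]
    exact min_eq_right (hZ p)

lemma coe_apply_zero_le_of_forall_lt {ι : Type*} [AddGroup ι] {c : ι} {A : ι → ℝ}
    (hA : ∀ i, i ≠ 0 → i ≠ c → A 0 < A i) {Z : ι → EReal} (hZ0 : Z 0 = ⊤)
    (hZ : ∀ p, p ≠ 0 → Z p = ((A (c - p) : ℝ) : EReal)) (p : ι) :
    ((A 0 : ℝ) : EReal) ≤ Z p := by
  by_cases hp : p = 0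
  · rw [hp, hZ0]
    exact le_top
  rw [hZ p hp]
  by_cases hcp : c - p = 0
  · rw [hcp]
  · exact EReal.coe_le_coe_iff.mpr (hA _ hcp (by rwa [Ne, sub_eq_self])).le

/-- The tropical commuting pair (vacuum state `W`, initial carrier `Z`) for `Φ(n,k)`.
Tuples of length `n-1` are modelled as functions on `ZMod n` with values in `EReal`;
the index class `0` corresponds to the subscript `n`, where the convention
`Z_n = W_n = +∞` holds (so such terms are omitted from the minima).
`A` is indexed by `ZMod n`, with `A 0 = A_n`. -/
theorem stmt_1 (n k : ℕ) (hn : 3 ≤ n) (hk : k ≤ n - 2)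
    (A : ZMod n → ℝ)
    (hA : ∀ i : ZMod n, i ≠ 0 → i ≠ ((k + 1 : ℕ) : ZMod n) →
      A i < A ((k + 1 : ℕ) : ZMod n) ∧ A 0 < A i)
    (Z W : ZMod n → EReal)
    (hZ0 : Z 0 = ⊤) (hW0 : W 0 = ⊤)
    (hZ : ∀ p : ZMod n, p ≠ 0 →
      Z p = ((A (((k + 1 : ℕ) : ZMod n) - p) : ℝ) : EReal))
    (hW : ∀ p : ZMod n, p ≠ 0 → W p = ((A 0 : ℝ) : EReal)) :
    ∀ j : ZMod n, j ≠ 0 →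
      W j + min (Z (((k + 2 : ℕ) : ZMod n) - j)) (W (j - 1)) -
          min (Z (((k + 1 : ℕ) : ZMod n) - j)) (W j) = W j ∧
      Z j + min (Z (j + 1)) (W (((k : ℕ) : ZMod n) - j)) -
          min (Z j) (W (((k + 1 : ℕ) : ZMod n) - j)) = Z j := by
  intro j hj
  have hc : ((k + 1 : ℕ) : ZMod n) ≠ 0 :=
    (ZMod.natCast_eq_zero_iff _ _).not.mpr (Nat.not_dvd_of_pos_of_lt (by omega) (by omega))
  have hZc : Z ((k + 1 : ℕ) : ZMod n) = ((A 0 : ℝ) : EReal) := by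
    rw [hZ _ hc, sub_self]
  have hmin := min_eq_of_forall_le_of_top
    (coe_apply_zero_le_of_forall_lt (fun i hi hic => (hA i hi hic).2) hZ0 hZ) hZc hW0 hW
  rw [hmin _ (j - 1) fun h => by push_cast; linear_combination -h,
    hmin _ j fun h => absurd h hj,
    hmin _ (((k : ℕ) : ZMod n) - j) fun h => by push_cast; linear_combination -h,
    hmin _ (((k + 1 : ℕ) : ZMod n) - j) fun h => by linear_combination -h]
  exact ⟨EReal.add_sub_cancel_right, EReal.add_sub_cancel_right⟩
end

section
/- Let n ≥ 3 be an integer, 0 ≤ k ≤ n−2, and let z, y be (n−1)-tuples of positive reals. Define y′ and z′ by the formulas y′_j = y_j·(z_{k+2−j}+y_{j−1})/(z_{k+1−j}+y_j) and z′_j = z_j·(z_{j+1}+y_{k−j})/(z_j+y_{k+1−j}) for j = 1,…,n−1 (subscripts modulo n in {1,…,n}, with y_n = z_n = 0). Define n-tuples p = (z_{k+1}, z_{k+2}, …, z_{n−1}, 0, z_1, z_2, …, z_k) and q = (0, y_{n−1}, y_{n−2}, …, y_1) of nonnegative reals, and define p′_i = p_i·(p_{i+1}+q_{i+1})/(p_i+q_i),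 q′_i = q_i·(p_{i+1}+q_{i+1})/(p_i+q_i) for i = 1,…,n (indices modulo n). Then p′ = (z′_{k+1}, z′_{k+2}, …, z′_{n−1}, 0, z′_1, …, z′_k) and q′ = (0, y′_{n−1}, y′_{n−2}, …, y′_1). In other words, the transformation (z,y) ↦ (y′,z′) defining φ(n,k) is described by the geometric R-matrix map R̄ : (p,q) ↦ (q′,p′). -/
/-! Under `p i = z (k + i)` and `q i = y (1 - i)` the R-matrix formulas become the formulas for
`z'` and `y'` term by term, after identities between indices in `ZMod n`; the components at the
index class `0` vanish on both sides because of the convention `y_n = z_n = 0`. -/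

/-- Tuples of length `n-1` are modelled as functions on
`ZMod n`, whose value at the class `0` (corresponding to the subscript `n`) is `0`
(the convention `y_n = z_n = 0`); the `n`-tuples `p`, `q` are functions on `ZMod n`
where the class `0` corresponds to the subscript `n`:
`p i = z_{⟨k+i⟩}` and `q i = y_{⟨1−i⟩}` (so that `p = (z_{k+1},…,z_{n−1},0,z_1,…,z_k)`
and `q = (0,y_{n−1},y_{n−2},…,y_1)`). -/
theorem stmt_2_general (n k : ℕ)
    (z y : ZMod n → ℝ) (hz0 : z 0 = 0) (hy0 : y 0 = 0)
    (y' z' : ZMod n → ℝ) (hy'0 : y' 0 = 0) (hz'0 : z' 0 = 0)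
    (hy' : ∀ j : ZMod n, j ≠ 0 →
      y' j = y j * (z (((k + 2 : ℕ) : ZMod n) - j) + y (j - 1)) /
        (z (((k + 1 : ℕ) : ZMod n) - j) + y j))
    (hz' : ∀ j : ZMod n, j ≠ 0 →
      z' j = z j * (z (j + 1) + y (((k : ℕ) : ZMod n) - j)) /
        (z j + y (((k + 1 : ℕ) : ZMod n) - j)))
    (p q : ZMod n → ℝ)
    (hp : ∀ i : ZMod n, p i = z (((k : ℕ) : ZMod n) + i))
    (hq : ∀ i : ZMod n, q i = y (1 - i)) :
    ∀ i : ZMod n,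
      p i * (p (i + 1) + q (i + 1)) / (p i + q i) = z' (((k : ℕ) : ZMod n) + i) ∧
      q i * (p (i + 1) + q (i + 1)) / (p i + q i) = y' (1 - i) := by
  intro i
  simp only [hp, hq]
  constructor
  · by_cases hj : (k : ZMod n) + i = 0
    · rw [hj, hz0, hz'0, zero_mul, zero_div]
    · rw [hz' _ hj]
      congrm _ * (z ?_ + y ?_) / (_ + y ?_) <;> push_cast <;> ring
  · by_cases hj : (1 : ZMod n) - i = 0
    · rw [hj, hy0, hy'0, zero_mul, zero_div]
    · rw [hy' _ hj]
      congrm _ * (z ?_ + y ?_) / (z ?_ + _) <;> push_cast <;> ring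

/-- The transformation `(z,y) ↦ (y′,z′)` defining `φ(n,k)` is described by the geometric
R-matrix `R̄ : (p,q) ↦ (q′,p′)`.  Tuples of length `n-1` are modelled as functions on
`ZMod n`, whose value at the class `0` (corresponding to the subscript `n`) is `0`
(the convention `y_n = z_n = 0`); the `n`-tuples `p`, `q` are functions on `ZMod n`
where the class `0` corresponds to the subscript `n`:
`p i = z_{⟨k+i⟩}` and `q i = y_{⟨1−i⟩}` (so that `p = (z_{k+1},…,z_{n−1},0,z_1,…,z_k)`
and `q = (0,y_{n−1},y_{n−2},…,y_1)`). -/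
theorem stmt_2 (n k : ℕ) (hn : 3 ≤ n) (hk : k ≤ n - 2)
    (z y : ZMod n → ℝ) (hz0 : z 0 = 0) (hy0 : y 0 = 0)
    (hzpos : ∀ p : ZMod n, p ≠ 0 → 0 < z p)
    (hypos : ∀ p : ZMod n, p ≠ 0 → 0 < y p)
    (y' z' : ZMod n → ℝ) (hy'0 : y' 0 = 0) (hz'0 : z' 0 = 0)
    (hy' : ∀ j : ZMod n, j ≠ 0 →
      y' j = y j * (z (((k + 2 : ℕ) : ZMod n) - j) + y (j - 1)) /
        (z (((k + 1 : ℕ) : ZMod n) - j) + y j))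
    (hz' : ∀ j : ZMod n, j ≠ 0 →
      z' j = z j * (z (j + 1) + y (((k : ℕ) : ZMod n) - j)) /
        (z j + y (((k + 1 : ℕ) : ZMod n) - j)))
    (p q : ZMod n → ℝ)
    (hp : ∀ i : ZMod n, p i = z (((k : ℕ) : ZMod n) + i))
    (hq : ∀ i : ZMod n, q i = y (1 - i)) :
    ∀ i : ZMod n,
      p i * (p (i + 1) + q (i + 1)) / (p i + q i) = z' (((k : ℕ) : ZMod n) + i) ∧
      q i * (p (i + 1) + q (i + 1)) / (p i + q i) = y' (1 - i) :=
  stmt_2_general n k z y hz0 hy0 y' z' hy'0 hz'0 hy' hz' p q hp hq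
end

section
/- Let n ≥ 3 be an integer and 0 ≤ k ≤ n−2. Let ι be the reversal map on (n−1)-tuples of positive reals, ι(a_1,…,a_{n−1}) = (a_{n−1},…,a_1), and let ρ̃ be the map on pairs of (n−1)-tuples given by ρ̃(a,b) = (ι(b), ι(a)). Then φ(n,n−2−k) ∘ ρ̃ ∘ φ(n,k) = ρ̃ as maps on pairs of (n−1)-tuples of positive reals; equivalently, φ(n,n−2−k) = ρ̃ ∘ φ(n,k)^{−1} ∘ ρ̃. -/
/-!
Write `σ(q) = z_q + y_{k+1-q}`. In these terms `φ(n,k)` reads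
`y'_j = y_j σ(k+2-j) / σ(k+1-j)` and `z'_j = z_j σ(j+1) / σ(j)`, and the sums of the image
are those of the source shifted by one: `z'_q + y'_{k+1-q} = σ(q+1)`. After the reflection `ρ̃`
the sums seen by `φ(n, n-2-k)` (whose `k+1` is `-(k+1)` mod `n`) are again values of `σ`, and
the two factors `σ(·)/σ(·)` cancel, giving back `ρ̃(z, y)`. Positivity keeps every `σ(q)`
nonzero, since `k+1 ≢ 0 (mod n)`.
-/

/-- The map `φ(n,k)` on pairs of `(n-1)`-tuples, modelled as functions on `ZMod n`
with the value at the class `0` (the subscript `n`) equal to `0` by convention. -/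
noncomputable def phiMap (n k : ℕ) (zy : (ZMod n → ℝ) × (ZMod n → ℝ)) :
    (ZMod n → ℝ) × (ZMod n → ℝ) :=
  (fun j => if j = 0 then 0 else
      zy.2 j * (zy.1 (((k + 2 : ℕ) : ZMod n) - j) + zy.2 (j - 1)) /
        (zy.1 (((k + 1 : ℕ) : ZMod n) - j) + zy.2 j),
   fun j => if j = 0 then 0 else
      zy.1 j * (zy.1 (j + 1) + zy.2 (((k : ℕ) : ZMod n) - j)) /
        (zy.1 j + zy.2 (((k + 1 : ℕ) : ZMod n) - j)))

/-- The reversal map `ι` on `(n-1)`-tuples: `ι(a)_p = a_{n-p}`. -/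
def iotaMap (n : ℕ) (a : ZMod n → ℝ) : ZMod n → ℝ := fun p => a (-p)

/-- The map `ρ̃(a,b) = (ι(b), ι(a))` on pairs of `(n-1)`-tuples. -/
def rhoMap (n : ℕ) (ab : (ZMod n → ℝ) × (ZMod n → ℝ)) :
    (ZMod n → ℝ) × (ZMod n → ℝ) :=
  (iotaMap n ab.2, iotaMap n ab.1)

section IndexGroup

variable {R : Type*} [AddCommGroupWithOne R]

/-- The sum `σ` of the header, with `c` in the role of `k + 1`. -/
def pairSum (c : R) (zy : (R → ℝ) × (R → ℝ)) (q : R) : ℝ :=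
  zy.1 q + zy.2 (c - q)

/-- The formula of `φ(n,k)` for tuples indexed by `R`, with `c = k + 1` and no convention at
the index `0`. -/
noncomputable def phiFormula (c : R) (zy : (R → ℝ) × (R → ℝ)) : (R → ℝ) × (R → ℝ) :=
  (fun j => zy.2 j * pairSum c zy (c + 1 - j) / pairSum c zy (c - j),
   fun j => zy.1 j * pairSum c zy (j + 1) / pairSum c zy j)

def pairReflect (ab : (R → ℝ) × (R → ℝ)) : (R → ℝ) × (R → ℝ) :=
  (fun p => ab.2 (-p), fun p => ab.1 (-p))

theorem pairSum_phiFormula_swap (c : R) (zy : (R → ℝ) × (R → ℝ)) {q : R}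
    (hq : pairSum c zy q ≠ 0) :
    pairSum c (phiFormula c zy).swap q = pairSum c zy (q + 1) := by
  rw [pairSum]
  simp only [phiFormula, Prod.fst_swap, Prod.snd_swap]
  rw [show c + 1 - (c - q) = q + 1 by abel, show c - (c - q) = q by abel, ← add_div,
    ← add_mul, ← pairSum, mul_div_cancel_left₀ _ hq]

theorem pairSum_pairReflect (c : R) (ab : (R → ℝ) × (R → ℝ)) (p : R) :
    pairSum (-c) (pairReflect ab) p = pairSum c ab.swap (-p) := by
  simp only [pairSum, pairReflect, Prod.fst_swap, Prod.snd_swap]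
  rw [show -(-c - p) = c - -p by abel]

theorem phiFormula_neg_pairReflect_phiFormula (c : R) (zy : (R → ℝ) × (R → ℝ))
    (h : ∀ q, pairSum c zy q ≠ 0) :
    phiFormula (-c) (pairReflect (phiFormula c zy)) = pairReflect zy := by
  set W := pairReflect (phiFormula c zy) with hW
  have hσ : ∀ p, pairSum (-c) W p = pairSum c zy (1 - p) := fun p => by
    rw [hW, pairSum_pairReflect, pairSum_phiFormula_swap c zy (h _), neg_add_eq_sub]
  ext j
  · simp only [phiFormula, hσ]
    simp only [hW, pairReflect, phiFormula]
    rw [show 1 - (-c + 1 - j) = c - -j by abel, show 1 - (-c - j) = c + 1 - -j by abel]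
    have := h (c - -j)
    have := h (c + 1 - -j)
    field_simp
  · simp only [phiFormula, hσ]
    simp only [hW, pairReflect, phiFormula]
    rw [show 1 - (j + 1) = -j by abel, show 1 - j = -j + 1 by abel]
    have := h (-j)
    have := h (-j + 1)
    field_simp

theorem pairSum_pos {c : R} (hc : c ≠ 0) {z y : R → ℝ} (hz0 : z 0 = 0) (hy0 : y 0 = 0)
    (hz : ∀ p, p ≠ 0 → 0 < z p) (hy : ∀ p, p ≠ 0 → 0 < y p) (q : R) :
    0 < pairSum c (z, y) q := by
  have nonneg : ∀ f : R → ℝ, f 0 = 0 → (∀ p, p ≠ 0 → 0 < f p) → ∀ p, 0 ≤ f p := by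
    intro f h0 hpos p
    rcases eq_or_ne p 0 with rfl | hp
    exacts [h0.ge, (hpos p hp).le]
  rcases eq_or_ne q 0 with rfl | hq
  · simpa [pairSum, hz0] using hy c hc
  · exact add_pos_of_pos_of_nonneg (hz q hq) (nonneg y hy0 hy _)

end IndexGroup

theorem phiMap_eq_phiFormula {n : ℕ} (k : ℕ) {zy : (ZMod n → ℝ) × (ZMod n → ℝ)}
    (hz0 : zy.1 0 = 0) (hy0 : zy.2 0 = 0) :
    phiMap n k zy = phiFormula ((k + 1 : ℕ) : ZMod n) zy := by
  ext j
  all_goals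
    rcases eq_or_ne j 0 with rfl | hj
    · simp [phiMap, phiFormula, hz0, hy0]
    · simp only [phiMap, phiFormula, pairSum, if_neg hj]
      push_cast
      ring_nf

/-- `φ(n,n−2−k) ∘ ρ̃ ∘ φ(n,k) = ρ̃` on pairs of positive `(n-1)`-tuples;
equivalently `φ(n,n−2−k) = ρ̃ ∘ φ(n,k)⁻¹ ∘ ρ̃`. -/
theorem stmt_3 (n k : ℕ) (hn : 3 ≤ n) (hk : k ≤ n - 2)
    (z y : ZMod n → ℝ) (hz0 : z 0 = 0) (hy0 : y 0 = 0)
    (hzpos : ∀ p : ZMod n, p ≠ 0 → 0 < z p)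
    (hypos : ∀ p : ZMod n, p ≠ 0 → 0 < y p) :
    phiMap n (n - 2 - k) (rhoMap n (phiMap n k (z, y))) = rhoMap n (z, y) := by
  set c : ZMod n := ((k + 1 : ℕ) : ZMod n)
  have hc : c ≠ 0 := by
    rw [Ne, ZMod.natCast_eq_zero_iff]
    exact fun hdvd => absurd (Nat.eq_zero_of_dvd_of_lt hdvd (by omega)) (by omega)
  have hc' : ((n - 2 - k + 1 : ℕ) : ZMod n) = -c := by
    rw [eq_neg_iff_add_eq_zero, ← Nat.cast_add, show n - 2 - k + 1 + (k + 1) = n by omega,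
      ZMod.natCast_self]
  have h0 : (rhoMap n (phiFormula c (z, y))).1 0 = 0 ∧
      (rhoMap n (phiFormula c (z, y))).2 0 = 0 := by
    simp [rhoMap, iotaMap, phiFormula, hz0, hy0]
  rw [phiMap_eq_phiFormula k hz0 hy0, phiMap_eq_phiFormula _ h0.1 h0.2, hc']
  exact phiFormula_neg_pairReflect_phiFormula c (z, y)
    fun q => (pairSum_pos hc hz0 hy0 hzpos hypos q).ne'
end

section
/- Let n ≥ 3 be an integer and 0 ≤ k ≤ n−2. Let W = (0,…,0) ∈ ℤ^{n−1} (the vacuum state) and Z* ∈ ℤ^{n−1} be the tuple with Z*_{k+1} = 0 and Z*_j = 1 for j ≠ k+1 (the initial carrier). Let b = (b_1,…,b_{n−1}) be a tuple of positive integers with b_{k+1} = 1, and set B = b_1 + ⋯ + b_{n−1}. Consider the initial configuration Y^0 with Y^0_0 = b and Y^0_i = W for all i ≥ 1, and evolve it by the Φ(n,k) dynamics with initial carrier Z*. Then: (i) at every time step the final carrier equals the initial one, i.e. for every t the carriers Z^t_i produced during the t-th step satisfy Z^t_i = Z* for all sufficiently large i; and (ii) for every integer m ≥ 0, the configuration after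 m·B time steps is the m-site translate of the initial one: Y^{mB}_m = b and Y^{mB}_i = W for all i ≠ m. In particular, b is a one-soliton of minimal length one with velocity 1/B = (Σ_{j=1}^{n−1} b_j)^{−1}. -/
/-- `min(Z_a, Y_b)` with the convention that the entry at the index class `0`
(the subscript `n`) is `+∞` and hence omitted from the minimum. -/
def tropMin (n : ℕ) (Z Y : ZMod n → ℤ) (a b : ZMod n) : ℤ :=
  if a = 0 then Y b else if b = 0 then Z a else min (Z a) (Y b)

/-- The new state `Y′` of the one-vertex step of `Φ(n,k)`:
`Y′_j = Y_j + min(Z_{k+2−j}, Y_{j−1}) − min(Z_{k+1−j}, Y_j)` for `j = 1,…,n−1`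
(subscripts mod `n`, entries at the class `0` being `+∞`-omitted; the unused
slot `0` of the output tuple is set to `0`). -/
def stepY (n k : ℕ) (Z Y : ZMod n → ℤ) : ZMod n → ℤ := fun j =>
  if j = 0 then 0 else
    Y j + tropMin n Z Y (((k + 2 : ℕ) : ZMod n) - j) (j - 1)
        - tropMin n Z Y (((k + 1 : ℕ) : ZMod n) - j) j

/-- The new carrier `Z′` of the one-vertex step of `Φ(n,k)`:
`Z′_j = Z_j + min(Z_{j+1}, Y_{k−j}) − min(Z_j, Y_{k+1−j})` for `j = 1,…,n−1`. -/
def stepZ (n k : ℕ) (Z Y : ZMod n → ℤ) : ZMod n → ℤ := fun j =>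
  if j = 0 then 0 else
    Z j + tropMin n Z Y (j + 1) (((k : ℕ) : ZMod n) - j)
        - tropMin n Z Y j (((k + 1 : ℕ) : ZMod n) - j)

/-- The carriers produced while performing one time step of the `Φ(n,k)` dynamics on a
configuration `Y` of states, starting from the initial carrier `Zs`:
`Z_0 = Zs`, `Z_{i+1} = stepZ(Z_i, Y_i)`. -/
def carriers (n k : ℕ) (Zs : ZMod n → ℤ) (Y : ℕ → ZMod n → ℤ) : ℕ → ZMod n → ℤ
  | 0 => Zs
  | i + 1 => stepZ n k (carriers n k Zs Y i) (Y i)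

/-- The time evolution of the `Φ(n,k)` dynamics: `config t` is the configuration
of states at time `t`, obtained from the initial configuration `Y0` using the
initial carrier `Zs` at each time step. -/
def config (n k : ℕ) (Zs : ZMod n → ℤ) (Y0 : ℕ → ZMod n → ℤ) : ℕ → ℕ → ZMod n → ℤ
  | 0 => Y0
  | t + 1 => fun i =>
      stepY n k (carriers n k Zs (config n k Zs Y0 t) i) (config n k Zs Y0 t i)

/-!
Writing every minimum as a flow `f_i = min(Z_{k+1-i}, Y_i)`, both updates become discrete
conservation laws: `Y'_j = Y_j + f_{j-1} - f_j` and `Z'_{k+1-i} = Z_{k+1-i} + f_{i-1} - f_i`.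
When the carrier `Z*` meets the soliton `b` (possibly partly emptied) at site `m`, the state
loses exactly one unit, from its lowest nonempty slot, and the carrier leaves with a single hole
facing that slot; at site `m + 1` the unit is deposited in the same slot and the carrier leaves
as `Z*` again, and it passes the vacuum unchanged. So each time step moves one unit of `b` from site `m` to site `m + 1`, in
increasing order of slots, and after `B` steps the soliton has moved one site. The hypothesis
`b_{k+1} = 1` makes slot `k + 1`, which faces the `+∞` entry of the carrier, behave like the
others.
-/

open Finset

theorem ZMod.val_sub_one_add_one {n : ℕ} [NeZero n] (i : ZMod n) :
    (i - 1).val + 1 = if i = 0 then n else i.val := by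
  split_ifs with hi
  · obtain ⟨m, rfl⟩ : ∃ m, n = m + 1 := ⟨n - 1, (Nat.succ_pred_eq_of_pos (NeZero.pos n)).symm⟩
    simp [hi, ZMod.val_neg_one]
  · have hpos : 0 < i.val := ZMod.val_pos.mpr hi
    have hone : (1 : ZMod n).val = 1 := by
      rw [ZMod.val_one_eq_one_mod, Nat.mod_eq_of_lt (by have := ZMod.val_lt i; omega)]
    rw [ZMod.val_sub (hone ▸ hpos), hone]
    omega

namespace TropicalSoliton

variable {n : ℕ}

def flow (n k : ℕ) (Z Y : ZMod n → ℤ) (i : ZMod n) : ℤ :=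
  tropMin n Z Y (((k + 1 : ℕ) : ZMod n) - i) i

theorem stepY_eq_flow (k : ℕ) (Z Y : ZMod n → ℤ) {j : ZMod n} (hj : j ≠ 0) :
    stepY n k Z Y j = Y j + flow n k Z Y (j - 1) - flow n k Z Y j := by
  have h : ((k + 2 : ℕ) : ZMod n) - j = ((k + 1 : ℕ) : ZMod n) - (j - 1) := by push_cast; ring
  simp only [stepY, if_neg hj, flow, h]

theorem stepZ_sub_eq_flow (k : ℕ) (Z Y : ZMod n → ℤ) {i : ZMod n}
    (hi : ((k + 1 : ℕ) : ZMod n) - i ≠ 0) :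
    stepZ n k Z Y (((k + 1 : ℕ) : ZMod n) - i) =
      Z (((k + 1 : ℕ) : ZMod n) - i) + flow n k Z Y (i - 1) - flow n k Z Y i := by
  have h₁ : ((k + 1 : ℕ) : ZMod n) - i + 1 = ((k + 1 : ℕ) : ZMod n) - (i - 1) := by ring
  have h₂ : ((k : ℕ) : ZMod n) - (((k + 1 : ℕ) : ZMod n) - i) = i - 1 := by push_cast; ring
  have h₃ : ((k + 1 : ℕ) : ZMod n) - (((k + 1 : ℕ) : ZMod n) - i) = i := sub_sub_cancel _ _
  simp only [stepZ, if_neg hi, flow, h₁, h₂, h₃]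

/-- A carrier with holes at the slots facing the state slots `i` with `hole i`; in the minima of
`Φ(n,k)` carrier slot `j` faces state slot `k + 1 - j`. -/
def holeCarrier (n k : ℕ) (hole : ZMod n → Prop) [DecidablePred hole] : ZMod n → ℤ :=
  fun j => if j = 0 ∨ hole (((k + 1 : ℕ) : ZMod n) - j) then 0 else 1

section holeCarrier

variable (k : ℕ) (hole : ZMod n → Prop) [DecidablePred hole]

theorem holeCarrier_sub {i : ZMod n} (hi : ((k + 1 : ℕ) : ZMod n) - i ≠ 0) :
    holeCarrier n k hole (((k + 1 : ℕ) : ZMod n) - i) = if hole i then 0 else 1 := by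
  simp only [holeCarrier, hi, sub_sub_cancel, false_or]

theorem flow_holeCarrier (Y : ZMod n → ℤ) (i : ZMod n) :
    flow n k (holeCarrier n k hole) Y i =
      if i = ((k + 1 : ℕ) : ZMod n) then Y i
      else if i = 0 then (if hole 0 then 0 else 1)
      else min (if hole i then 0 else 1) (Y i) := by
  by_cases hK : i = ((k + 1 : ℕ) : ZMod n)
  · simp [flow, tropMin, hK]
  · have hi : ((k + 1 : ℕ) : ZMod n) - i ≠ 0 := sub_ne_zero.mpr (Ne.symm hK)
    by_cases h0 : i = 0
    · subst h0
      simp only [flow, tropMin, hi, holeCarrier_sub k hole hi, if_false, if_true, hK]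
    · simp only [flow, tropMin, hi, holeCarrier_sub k hole hi, if_false, hK, h0]

theorem stepZ_eq_holeCarrier {Z Y : ZMod n → ℤ}
    (h : ∀ i, ((k + 1 : ℕ) : ZMod n) - i ≠ 0 →
      Z (((k + 1 : ℕ) : ZMod n) - i) + flow n k Z Y (i - 1) - flow n k Z Y i =
        if hole i then 0 else 1) :
    stepZ n k Z Y = holeCarrier n k hole := by
  funext j
  by_cases hj : j = 0
  · simp [stepZ, holeCarrier, hj]
  · obtain ⟨i, rfl⟩ : ∃ i, j = ((k + 1 : ℕ) : ZMod n) - i := ⟨_, (sub_sub_cancel _ j).symm⟩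
    rw [stepZ_sub_eq_flow k Z Y hj, holeCarrier_sub k hole hj, h i hj]

end holeCarrier

theorem initCarrier_eq_holeCarrier (k : ℕ) :
    (fun j : ZMod n => if j = 0 then (0 : ℤ) else
      if j = ((k + 1 : ℕ) : ZMod n) then 0 else 1) = holeCarrier n k (· = 0) := by
  funext j
  simp only [holeCarrier, sub_eq_zero, eq_comm (a := ((k + 1 : ℕ) : ZMod n)), ← ite_or]

def below (b : ZMod n → ℤ) (j : ZMod n) : ℤ :=
  ∑ i ∈ range j.val, b (i : ZMod n)

theorem below_zero (b : ZMod n → ℤ) : below b 0 = 0 := by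
  simp [below]

theorem below_add_self [NeZero n] (b : ZMod n → ℤ) (i : ZMod n) :
    below b i + b i = ∑ j ∈ range (i.val + 1), b (j : ZMod n) := by
  rw [sum_range_succ, ZMod.natCast_zmod_val, below]

theorem below_sub_one_add [NeZero n] (b : ZMod n → ℤ) (i : ZMod n) :
    below b (i - 1) + b (i - 1) = if i = 0 then ∑ j ∈ range n, b (j : ZMod n) else below b i := by
  rw [below_add_self, ZMod.val_sub_one_add_one]
  split_ifs <;> rfl

theorem below_nonneg {b : ZMod n → ℤ} (hb : ∀ j, 0 ≤ b j) (i : ZMod n) : 0 ≤ below b i :=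
  sum_nonneg fun j _ => hb j

theorem below_add_le_sum [NeZero n] {b : ZMod n → ℤ} (hb : ∀ j, 0 ≤ b j) (i : ZMod n) :
    below b i + b i ≤ ∑ j ∈ range n, b (j : ZMod n) := by
  rw [below_add_self]
  exact sum_le_sum_of_subset_of_nonneg (range_subset_range.mpr (ZMod.val_lt i))
    fun j _ _ => hb j

/-- After `l` units of `b` have been transported, slot `j` has given away `moved b l j` of its
`b j` units: the units leave in the order of increasing slots. -/
def moved (b : ZMod n → ℤ) (l : ℕ) (j : ZMod n) : ℤ :=
  max 0 (min (b j) (l - below b j))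

theorem moved_succ {b : ZMod n → ℤ} {j : ZMod n} (hbj : 0 ≤ b j) (l : ℕ) :
    moved b (l + 1) j =
      moved b l j + if below b j ≤ l ∧ (l : ℤ) < below b j + b j then 1 else 0 := by
  simp only [moved]
  push_cast
  split_ifs <;> omega

theorem moved_zero {b : ZMod n → ℤ} (hb : ∀ j, 0 ≤ b j) : moved b 0 = 0 := by
  funext j
  have := below_nonneg hb j
  simp only [moved, Pi.zero_apply, Nat.cast_zero]
  omega

theorem moved_of_sum_le [NeZero n] {b : ZMod n → ℤ} (hb : ∀ j, 0 ≤ b j) {l : ℕ}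
    (hl : ∑ j ∈ range n, b (j : ZMod n) ≤ l) : moved b l = b := by
  funext j
  have := below_add_le_sum hb j
  have := hb j
  simp only [moved]
  omega

section flows

variable {k : ℕ} {b : ZMod n → ℤ}

theorem soliton_nonneg (hb0 : b 0 = 0) (hb : ∀ j, j ≠ 0 → 1 ≤ b j) (j : ZMod n) : 0 ≤ b j := by
  by_cases hj : j = 0
  · exact hj ▸ hb0.ge
  · exact zero_le_one.trans (hb j hj)

/-- The carrier while a soliton `b` passes on its `l+1`-st unit: one hole, facing the slot
from which that unit is taken. -/
def midCarrier (n k : ℕ) (b : ZMod n → ℤ) (l : ℕ) : ZMod n → ℤ :=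
  holeCarrier n k fun i => below b i ≤ l ∧ (l : ℤ) < below b i + b i

theorem flow_tail (hb0 : b 0 = 0) (hb : ∀ j, j ≠ 0 → 1 ≤ b j)
    (hbk : b ((k + 1 : ℕ) : ZMod n) = 1) (l : ℕ) (i : ZMod n) :
    flow n k (holeCarrier n k (· = 0)) (b - moved b l) i =
      if (l : ℤ) < below b i + b i then 1 else 0 := by
  rw [flow_holeCarrier]
  by_cases hK : i = ((k + 1 : ℕ) : ZMod n)
  · subst hK
    simp only [if_true, Pi.sub_apply, moved, hbk]
    split_ifs <;> omega
  by_cases h0 : i = 0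
  · subst h0
    simp only [hK, if_true, if_false, Pi.sub_apply, below_zero, hb0]
    simp
  · have := hb i h0
    simp only [hK, h0, if_false, Pi.sub_apply, moved]
    split_ifs <;> omega

theorem flow_head (hb0 : b 0 = 0) (hb : ∀ j, j ≠ 0 → 1 ≤ b j)
    (hbk : b ((k + 1 : ℕ) : ZMod n) = 1) (l : ℕ) (i : ZMod n) :
    flow n k (midCarrier n k b l) (moved b l) i =
      if below b i + b i ≤ l then 1 else 0 := by
  rw [midCarrier, flow_holeCarrier]
  by_cases hK : i = ((k + 1 : ℕ) : ZMod n)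
  · subst hK
    simp only [if_true, moved, hbk]
    split_ifs <;> omega
  by_cases h0 : i = 0
  · subst h0
    simp only [hK, if_true, if_false, below_zero, hb0]
    simp
  · have := hb i h0
    simp only [hK, h0, if_false, moved]
    split_ifs <;> omega

theorem flow_vacuum (i : ZMod n) : flow n k (holeCarrier n k (· = 0)) 0 i = 0 := by
  rw [flow_holeCarrier]
  split_ifs <;> simp_all

theorem stepY_vacuum : stepY n k (holeCarrier n k (· = 0)) 0 = 0 := by
  funext j
  by_cases hj : j = 0
  · simp [stepY, hj]
  · rw [stepY_eq_flow k _ _ hj, flow_vacuum, flow_vacuum]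
    simp

theorem stepZ_vacuum : stepZ n k (holeCarrier n k (· = 0)) 0 = holeCarrier n k (· = 0) := by
  refine stepZ_eq_holeCarrier k _ fun i hi => ?_
  rw [holeCarrier_sub k _ hi, flow_vacuum, flow_vacuum]
  ring

variable [NeZero n]

theorem stepY_tail (hb0 : b 0 = 0) (hb : ∀ j, j ≠ 0 → 1 ≤ b j)
    (hbk : b ((k + 1 : ℕ) : ZMod n) = 1) (l : ℕ) :
    stepY n k (holeCarrier n k (· = 0)) (b - moved b l) = b - moved b (l + 1) := by
  funext j
  by_cases hj : j = 0
  · subst hj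
    simp only [stepY, if_true, Pi.sub_apply, moved, hb0]
    omega
  · rw [stepY_eq_flow k _ _ hj, flow_tail hb0 hb hbk, flow_tail hb0 hb hbk, below_sub_one_add,
      if_neg hj, Pi.sub_apply, Pi.sub_apply, moved_succ (soliton_nonneg hb0 hb j)]
    have := hb j hj
    split_ifs <;> omega

theorem stepZ_tail (hb0 : b 0 = 0) (hb : ∀ j, j ≠ 0 → 1 ≤ b j)
    (hbk : b ((k + 1 : ℕ) : ZMod n) = 1) {l : ℕ}
    (hl : (l : ℤ) < ∑ j ∈ range n, b (j : ZMod n)) :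
    stepZ n k (holeCarrier n k (· = 0)) (b - moved b l) = midCarrier n k b l := by
  refine stepZ_eq_holeCarrier k _ fun i hi => ?_
  rw [holeCarrier_sub k _ hi, flow_tail hb0 hb hbk, flow_tail hb0 hb hbk, below_sub_one_add]
  by_cases h0 : i = 0
  · subst h0
    simp only [below_zero, hb0, add_zero, if_true]
    split_ifs <;> omega
  · have := hb i h0
    simp only [h0, if_false]
    split_ifs <;> omega

theorem stepY_head (hb0 : b 0 = 0) (hb : ∀ j, j ≠ 0 → 1 ≤ b j)
    (hbk : b ((k + 1 : ℕ) : ZMod n) = 1) (l : ℕ) :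
    stepY n k (midCarrier n k b l) (moved b l) = moved b (l + 1) := by
  funext j
  by_cases hj : j = 0
  · subst hj
    simp only [stepY, if_true, moved, hb0]
    omega
  · rw [stepY_eq_flow k _ _ hj, flow_head hb0 hb hbk, flow_head hb0 hb hbk, below_sub_one_add,
      if_neg hj, moved_succ (soliton_nonneg hb0 hb j)]
    have := hb j hj
    split_ifs <;> omega

theorem stepZ_head (hb0 : b 0 = 0) (hb : ∀ j, j ≠ 0 → 1 ≤ b j)
    (hbk : b ((k + 1 : ℕ) : ZMod n) = 1) {l : ℕ}
    (hl : (l : ℤ) < ∑ j ∈ range n, b (j : ZMod n)) :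
    stepZ n k (midCarrier n k b l) (moved b l) = holeCarrier n k (· = 0) := by
  refine stepZ_eq_holeCarrier k _ fun i hi => ?_
  rw [midCarrier, holeCarrier_sub k _ hi, ← midCarrier, flow_head hb0 hb hbk,
    flow_head hb0 hb hbk, below_sub_one_add]
  by_cases h0 : i = 0
  · subst h0
    simp only [below_zero, hb0, add_zero, if_true]
    split_ifs <;> omega
  · have := hb i h0
    simp only [h0, if_false]
    split_ifs <;> omega

end flows

def step (n k : ℕ) (Zs : ZMod n → ℤ) (Y : ℕ → ZMod n → ℤ) : ℕ → ZMod n → ℤ :=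
  fun i => stepY n k (carriers n k Zs Y i) (Y i)

/-- The soliton `b` at site `m` after `l` of its units have been transported to site `m + 1`. -/
def shape (b : ZMod n → ℤ) (m l : ℕ) : ℕ → ZMod n → ℤ :=
  fun i => if i = m then b - moved b l else if i = m + 1 then moved b l else 0

theorem shape_zero {b : ZMod n → ℤ} (hb : ∀ j, 0 ≤ b j) (m : ℕ) :
    shape b m 0 = fun i => if i = m then b else 0 := by
  funext i
  simp only [shape, moved_zero hb, sub_zero]
  split_ifs <;> rfl

section dynamics

variable [NeZero n] {k : ℕ} {b : ZMod n → ℤ}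

theorem shape_sum (hb : ∀ j, 0 ≤ b j) {B : ℕ} (hB : (B : ℤ) = ∑ j ∈ range n, b (j : ZMod n))
    (m : ℕ) : shape b m B = shape b (m + 1) 0 := by
  funext i
  simp only [shape, moved_of_sum_le hb hB.ge, moved_zero hb, sub_self, sub_zero]
  split_ifs <;> first | rfl | omega

theorem carriers_shape (hb0 : b 0 = 0) (hb : ∀ j, j ≠ 0 → 1 ≤ b j)
    (hbk : b ((k + 1 : ℕ) : ZMod n) = 1) {l : ℕ}
    (hl : (l : ℤ) < ∑ j ∈ range n, b (j : ZMod n)) (m i : ℕ) :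
    carriers n k (holeCarrier n k (· = 0)) (shape b m l) i =
      if i = m + 1 then midCarrier n k b l else holeCarrier n k (· = 0) := by
  induction i with
  | zero => simp [carriers]
  | succ i ih =>
    rw [carriers, ih]
    by_cases him : i = m
    · simp [shape, him, stepZ_tail hb0 hb hbk hl]
    by_cases him' : i = m + 1
    · simp [shape, him', stepZ_head hb0 hb hbk hl]
    · simp [shape, him, him', stepZ_vacuum]

theorem step_shape (hb0 : b 0 = 0) (hb : ∀ j, j ≠ 0 → 1 ≤ b j)
    (hbk : b ((k + 1 : ℕ) : ZMod n) = 1) {l : ℕ}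
    (hl : (l : ℤ) < ∑ j ∈ range n, b (j : ZMod n)) (m : ℕ) :
    step n k (holeCarrier n k (· = 0)) (shape b m l) = shape b m (l + 1) := by
  funext i
  simp only [step, carriers_shape hb0 hb hbk hl]
  by_cases him : i = m
  · simp [shape, him, stepY_tail hb0 hb hbk]
  by_cases him' : i = m + 1
  · simp [shape, him', stepY_head hb0 hb hbk]
  · simp [shape, him, him', stepY_vacuum]

theorem config_add (hb0 : b 0 = 0) (hb : ∀ j, j ≠ 0 → 1 ≤ b j)
    (hbk : b ((k + 1 : ℕ) : ZMod n) = 1) {B : ℕ}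
    (hB : (B : ℤ) = ∑ j ∈ range n, b (j : ZMod n)) {Y0 : ℕ → ZMod n → ℤ} {s m : ℕ}
    (hs : config n k (holeCarrier n k (· = 0)) Y0 s = shape b m 0) {l : ℕ} (hl : l ≤ B) :
    config n k (holeCarrier n k (· = 0)) Y0 (s + l) = shape b m l := by
  induction l with
  | zero => exact hs
  | succ l ih =>
    rw [← add_assoc]
    change step n k _ (config n k _ Y0 (s + l)) = _
    rw [ih (by omega), step_shape hb0 hb hbk (by omega) m]

theorem config_mul (hb0 : b 0 = 0) (hb : ∀ j, j ≠ 0 → 1 ≤ b j)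
    (hbk : b ((k + 1 : ℕ) : ZMod n) = 1) {B : ℕ}
    (hB : (B : ℤ) = ∑ j ∈ range n, b (j : ZMod n)) (m : ℕ) :
    config n k (holeCarrier n k (· = 0)) (fun i => if i = 0 then b else 0) (m * B) =
      shape b m 0 := by
  induction m with
  | zero => rw [zero_mul, shape_zero (soliton_nonneg hb0 hb)]; rfl
  | succ m ih =>
    rw [Nat.succ_mul, config_add hb0 hb hbk hB ih le_rfl,
      shape_sum (soliton_nonneg hb0 hb) hB]

end dynamics

end TropicalSoliton

theorem stmt_4_general (n k : ℕ) (hn : 3 ≤ n)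
    (b : ZMod n → ℤ) (hb0 : b 0 = 0)
    (hb : ∀ j : ZMod n, j ≠ 0 → 1 ≤ b j)
    (hbk : b ((k + 1 : ℕ) : ZMod n) = 1)
    (B : ℕ) (hB : (B : ℤ) = ∑ j ∈ Finset.range n, b ((j : ℕ) : ZMod n))
    (W Zs : ZMod n → ℤ)
    (hW : W = fun _ => 0)
    (hZs : Zs = fun j => if j = 0 then 0 else
      if j = ((k + 1 : ℕ) : ZMod n) then 0 else 1)
    (Y0 : ℕ → ZMod n → ℤ)
    (hY0 : Y0 = fun i => if i = 0 then b else W) :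
    (∀ t : ℕ, ∃ N : ℕ, ∀ i : ℕ, N ≤ i →
        carriers n k Zs (config n k Zs Y0 t) i = Zs) ∧
    (∀ m : ℕ, config n k Zs Y0 (m * B) = fun i => if i = m then b else W) := by
  have : NeZero n := ⟨by omega⟩
  obtain rfl : W = 0 := hW
  subst hZs hY0
  rw [TropicalSoliton.initCarrier_eq_holeCarrier]
  have hb' := TropicalSoliton.soliton_nonneg hb0 hb
  have hB0 : 0 < B := by
    have := TropicalSoliton.below_add_le_sum hb' ((k + 1 : ℕ) : ZMod n)
    have := TropicalSoliton.below_nonneg hb' ((k + 1 : ℕ) : ZMod n)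
    omega
  have hmul := TropicalSoliton.config_mul hb0 hb hbk hB
  refine ⟨fun t => ⟨t / B + 2, fun i hi => ?_⟩, fun m => ?_⟩
  · have hl : t % B < B := Nat.mod_lt t hB0
    rw [← Nat.div_add_mod' t B, TropicalSoliton.config_add hb0 hb hbk hB (hmul _) hl.le,
      TropicalSoliton.carriers_shape hb0 hb hbk (by omega), if_neg (by omega)]
  · rw [hmul, TropicalSoliton.shape_zero hb']

/-- Theorem (one-solitons of `Φ(n,k)`): any `b = (b_1,…,b_{n−1})` with `b_j ≥ 1` and
`b_{k+1} = 1` is a one-soliton of minimal length one and velocity `1/B`,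
`B = b_1 + ⋯ + b_{n−1}`: (i) at each time step the final carrier equals the initial
carrier `Z* = (1,…,1,0,1,…,1)` (with `0` in slot `k+1`), and (ii) after `m·B` time
steps the configuration is the `m`-site translate of the initial one.
Tuples are modelled as functions on `ZMod n` with the slot of the class `0`
(the subscript `n`) set to `0`. -/
theorem stmt_4 (n k : ℕ) (hn : 3 ≤ n) (hk : k ≤ n - 2)
    (b : ZMod n → ℤ) (hb0 : b 0 = 0)
    (hb : ∀ j : ZMod n, j ≠ 0 → 1 ≤ b j)
    (hbk : b ((k + 1 : ℕ) : ZMod n) = 1)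
    (B : ℕ) (hB : (B : ℤ) = ∑ j ∈ Finset.range n, b ((j : ℕ) : ZMod n))
    (W Zs : ZMod n → ℤ)
    (hW : W = fun _ => 0)
    (hZs : Zs = fun j => if j = 0 then 0 else
      if j = ((k + 1 : ℕ) : ZMod n) then 0 else 1)
    (Y0 : ℕ → ZMod n → ℤ)
    (hY0 : Y0 = fun i => if i = 0 then b else W) :
    (∀ t : ℕ, ∃ N : ℕ, ∀ i : ℕ, N ≤ i →
        carriers n k Zs (config n k Zs Y0 t) i = Zs) ∧
    (∀ m : ℕ, config n k Zs Y0 (m * B) = fun i => if i = m then b else W) :=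
  stmt_4_general n k hn b hb0 hb hbk B hB W Zs hW hZs Y0 hY0
end

section
/- Let α_i, α_j, α_k be real numbers with α_i > α_j > α_k, and let T, T_i, T_j, T_k, T_{ij}, T_{ik}, T_{jk}, T_{ijk} be positive reals satisfying the Hirota bilinear relation (α_i−α_k)·T_j·T_{ik} = (α_i−α_j)·T_k·T_{ij} + (α_j−α_k)·T_i·T_{jk}. Define a = (α_i−α_j)·T_{ij}·T/(T_i·T_j), b = (α_i−α_k)·T_{ijk}·T_j/(T_{ij}·T_{jk}), c = (α_j−α_k)·T_{jk}·T/(T_j·T_k), and a′ = (α_j−α_k)·T_{ijk}·T_i/(T_{ij}·T_{ik}), b′ = (α_i−α_k)·T_{ik}·T/(T_i·T_k), c′ = (α_i−α_j)·T_{ijk}·T_k/(T_{ik}·T_{jk}). Then a′ = b·c/(a+c), b′ = a+c, and c′ = a·b/(a+c). In other words, the enriched Yang–Baxter move on chamber variables induces the Lusztig Yang–Baxter move (a,b,c) ↦ (bc/(a+c), a+c, ab/(a+c)) on the vertex variables. -/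
/-!
The relation `b' = a + c` is the Hirota bilinear relation multiplied by
`T / (Ti * Tj * Tk)`, while `a' * b' = b * c` and
`c' * b' = a * b` are identities of rational functions in which the chamber variables
cancel. Positivity of `a + c` then lets one divide by `b'`.
-/

noncomputable def vertexWeight (α β top bottom left right : ℝ) : ℝ :=
  (α - β) * top * bottom / (left * right)

lemma vertexWeight_pos {α β top bottom left right : ℝ} (hαβ : β < α) (htop : 0 < top)
    (hbottom : 0 < bottom) (hleft : 0 < left) (hright : 0 < right) :
    0 < vertexWeight α β top bottom left right := by
  have : 0 < α - β := sub_pos.2 hαβ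
  unfold vertexWeight
  positivity

lemma vertexWeight_add_of_hirota {αi αj αk T Ti Tj Tk Tij Tik Tjk : ℝ}
    (hTi : Ti ≠ 0) (hTj : Tj ≠ 0) (hTk : Tk ≠ 0)
    (hHirota : (αi - αk) * Tj * Tik = (αi - αj) * Tk * Tij + (αj - αk) * Ti * Tjk) :
    vertexWeight αi αj Tij T Ti Tj + vertexWeight αj αk Tjk T Tj Tk =
      vertexWeight αi αk Tik T Ti Tk := by
  unfold vertexWeight
  field_simp
  linear_combination -T * hHirota

lemma vertexWeight_mul_vertexWeight_left {αi αj αk T Ti Tj Tk Tij Tik Tjk Tijk : ℝ}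
    (hTi : Ti ≠ 0) (hTj : Tj ≠ 0) (hTik : Tik ≠ 0) (hTjk : Tjk ≠ 0) :
    vertexWeight αj αk Tijk Ti Tij Tik * vertexWeight αi αk Tik T Ti Tk =
      vertexWeight αi αk Tijk Tj Tij Tjk * vertexWeight αj αk Tjk T Tj Tk := by
  unfold vertexWeight
  field_simp

lemma vertexWeight_mul_vertexWeight_right {αi αj αk T Ti Tj Tk Tij Tik Tjk Tijk : ℝ}
    (hTj : Tj ≠ 0) (hTk : Tk ≠ 0) (hTij : Tij ≠ 0) (hTik : Tik ≠ 0) :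
    vertexWeight αi αj Tijk Tk Tik Tjk * vertexWeight αi αk Tik T Ti Tk =
      vertexWeight αi αj Tij T Ti Tj * vertexWeight αi αk Tijk Tj Tij Tjk := by
  unfold vertexWeight
  field_simp

lemma lusztig_move_of_relations {a b c a' b' c' : ℝ} (hac : a + c ≠ 0) (hb' : b' = a + c)
    (ha' : a' * b' = b * c) (hc' : c' * b' = a * b) :
    a' = b * c / (a + c) ∧ b' = a + c ∧ c' = a * b / (a + c) := by
  subst hb'
  exact ⟨eq_div_of_mul_eq hac ha', rfl, eq_div_of_mul_eq hac hc'⟩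

theorem stmt_5_general (αi αj αk : ℝ) (hij : αj < αi) (hjk : αk < αj)
    (T Ti Tj Tk Tij Tik Tjk Tijk : ℝ)
    (hT : 0 < T) (hTi : 0 < Ti) (hTj : 0 < Tj) (hTk : 0 < Tk)
    (hTij : 0 < Tij) (hTik : 0 < Tik) (hTjk : 0 < Tjk)
    (hHirota : (αi - αk) * Tj * Tik = (αi - αj) * Tk * Tij + (αj - αk) * Ti * Tjk)
    (a b c a' b' c' : ℝ)
    (ha : a = (αi - αj) * Tij * T / (Ti * Tj))
    (hb : b = (αi - αk) * Tijk * Tj / (Tij * Tjk))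
    (hc : c = (αj - αk) * Tjk * T / (Tj * Tk))
    (ha' : a' = (αj - αk) * Tijk * Ti / (Tij * Tik))
    (hb' : b' = (αi - αk) * Tik * T / (Ti * Tk))
    (hc' : c' = (αi - αj) * Tijk * Tk / (Tik * Tjk)) :
    a' = b * c / (a + c) ∧ b' = a + c ∧ c' = a * b / (a + c) := by
  change a = vertexWeight αi αj Tij T Ti Tj at ha
  change b = vertexWeight αi αk Tijk Tj Tij Tjk at hb
  change c = vertexWeight αj αk Tjk T Tj Tk at hc
  change a' = vertexWeight αj αk Tijk Ti Tij Tik at ha'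
  change b' = vertexWeight αi αk Tik T Ti Tk at hb'
  change c' = vertexWeight αi αj Tijk Tk Tik Tjk at hc'
  subst ha hb hc ha' hb' hc'
  have hac : 0 < vertexWeight αi αj Tij T Ti Tj + vertexWeight αj αk Tjk T Tj Tk :=
    add_pos (vertexWeight_pos hij hTij hT hTi hTj) (vertexWeight_pos hjk hTjk hT hTj hTk)
  exact lusztig_move_of_relations hac.ne'
    (vertexWeight_add_of_hirota hTi.ne' hTj.ne' hTk.ne' hHirota).symm
    (vertexWeight_mul_vertexWeight_left hTi.ne' hTj.ne' hTik.ne' hTjk.ne')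
    (vertexWeight_mul_vertexWeight_right hTj.ne' hTk.ne' hTij.ne' hTik.ne')

/-- The enriched Yang–Baxter move on chamber variables induces the Lusztig
Yang–Baxter move `(a,b,c) ↦ (bc/(a+c), a+c, ab/(a+c))` on the vertex variables. -/
theorem stmt_5 (αi αj αk : ℝ) (hij : αj < αi) (hjk : αk < αj)
    (T Ti Tj Tk Tij Tik Tjk Tijk : ℝ)
    (hT : 0 < T) (hTi : 0 < Ti) (hTj : 0 < Tj) (hTk : 0 < Tk)
    (hTij : 0 < Tij) (hTik : 0 < Tik) (hTjk : 0 < Tjk) (hTijk : 0 < Tijk)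
    (hHirota : (αi - αk) * Tj * Tik = (αi - αj) * Tk * Tij + (αj - αk) * Ti * Tjk)
    (a b c a' b' c' : ℝ)
    (ha : a = (αi - αj) * Tij * T / (Ti * Tj))
    (hb : b = (αi - αk) * Tijk * Tj / (Tij * Tjk))
    (hc : c = (αj - αk) * Tjk * T / (Tj * Tk))
    (ha' : a' = (αj - αk) * Tijk * Ti / (Tij * Tik))
    (hb' : b' = (αi - αk) * Tik * T / (Ti * Tk))
    (hc' : c' = (αi - αj) * Tijk * Tk / (Tik * Tjk)) :
    a' = b * c / (a + c) ∧ b' = a + c ∧ c' = a * b / (a + c) :=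
  stmt_5_general αi αj αk hij hjk T Ti Tj Tk Tij Tik Tjk Tijk hT hTi hTj hTk hTij hTik hTjk hHirota
    a b c a' b' c' ha hb hc ha' hb' hc'
end

section
/- Let α_1, α_2, α_3 be real numbers with α_2 < α_1 < α_3, and set δ = (α_1−α_2)/(α_3−α_1). Suppose τ : ℤ² → ℝ_{>0} satisfies, for all (i,t) ∈ ℤ², the bilinear equation (1+δ)·τ(i,t−1)·τ(i+2,t+1) = τ(i+1,t+1)·τ(i+1,t−1) + δ·τ(i,t)·τ(i+2,t). Define, for all i,t ∈ ℤ: y_{i,1}^t = (α_3−α_1)·τ(i+1,t)·τ(i+1,t−1)/(τ(i,t−1)·τ(i+2,t)), y_{i,2}^t = (α_3−α_2)·τ(i+1,t−1)·τ(i+2,t)/(τ(i+1,t)·τ(i+2,t−1)), z_{i,1}^t = (α_1−α_2)·τ(i+1,t)·τ(i,t)/(τ(i+1,t+1)·τ(i,t−1)), z_{i,2}^t = (α_3−α_2)·τ(i,t−1)·τ(i+1,t)/(τ(i,t)·τ(i+1,t−1)). Then these quantities satisfy the φ(3,1) evolution equations for all i,t: y_{i,1}^{t+1} = z_{i,2}^t·y_{i,1}^t/(z_{i,1}^t+y_{i,1}^t),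 y_{i,2}^{t+1} = z_{i,1}^t+y_{i,1}^t, z_{i+1,1}^t = z_{i,1}^t·z_{i,2}^t/(z_{i,1}^t+y_{i,1}^t), and z_{i+1,2}^t = y_{i,2}^t. -/
/-- A solution of the bilinear equation gives a solution of `φ(3,1)` via the
tau-function substitution. -/
theorem stmt_6 (α1 α2 α3 : ℝ) (h21 : α2 < α1) (h13 : α1 < α3)
    (δ : ℝ) (hδ : δ = (α1 - α2) / (α3 - α1))
    (τ : ℤ → ℤ → ℝ) (hτ : ∀ i t : ℤ, 0 < τ i t)
    (hbil : ∀ i t : ℤ,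
      (1 + δ) * (τ i (t - 1) * τ (i + 2) (t + 1)) =
        τ (i + 1) (t + 1) * τ (i + 1) (t - 1) + δ * (τ i t * τ (i + 2) t))
    (y1 y2 z1 z2 : ℤ → ℤ → ℝ)
    (hy1 : ∀ i t : ℤ, y1 i t =
      (α3 - α1) * (τ (i + 1) t * τ (i + 1) (t - 1)) / (τ i (t - 1) * τ (i + 2) t))
    (hy2 : ∀ i t : ℤ, y2 i t =
      (α3 - α2) * (τ (i + 1) (t - 1) * τ (i + 2) t) / (τ (i + 1) t * τ (i + 2) (t - 1)))
    (hz1 : ∀ i t : ℤ, z1 i t =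
      (α1 - α2) * (τ (i + 1) t * τ i t) / (τ (i + 1) (t + 1) * τ i (t - 1)))
    (hz2 : ∀ i t : ℤ, z2 i t =
      (α3 - α2) * (τ i (t - 1) * τ (i + 1) t) / (τ i t * τ (i + 1) (t - 1))) :
    ∀ i t : ℤ,
      y1 i (t + 1) = z2 i t * y1 i t / (z1 i t + y1 i t) ∧
      y2 i (t + 1) = z1 i t + y1 i t ∧
      z1 (i + 1) t = z1 i t * z2 i t / (z1 i t + y1 i t) ∧
      z2 (i + 1) t = y2 i t := by
  intro i t
  have hA : (0:ℝ) < α3 - α1 := by linarith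
  have hB : (0:ℝ) < α1 - α2 := by linarith
  have hC : (0:ℝ) < α3 - α2 := by linarith
  have hne : ∀ i' t' : ℤ, τ i' t' ≠ 0 := fun i' t' => (hτ i' t').ne'
  have key : (α3 - α2) * (τ i (t-1) * τ (i+2) (t+1)) =
      (α3 - α1) * (τ (i+1) (t+1) * τ (i+1) (t-1)) +
      (α1 - α2) * (τ i t * τ (i+2) t) := by
    have h := hbil i t
    rw [hδ] at h
    field_simp at h
    linear_combination h
  have e2 : i + 1 + 1 = i + 2 := by ring
  have et : t + 1 - 1 = t := by ring
  have hsum : z1 i t + y1 i t =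
      (α3 - α2) * (τ (i+1) t * τ (i+2) (t+1)) / (τ (i+1) (t+1) * τ (i+2) t) := by
    rw [hz1, hy1, div_add_div _ _ (mul_ne_zero (hne _ _) (hne _ _))
      (mul_ne_zero (hne _ _) (hne _ _)),
      div_eq_div_iff (mul_ne_zero (mul_ne_zero (hne _ _) (hne _ _))
        (mul_ne_zero (hne _ _) (hne _ _))) (mul_ne_zero (hne _ _) (hne _ _))]
    linear_combination (-(τ i (t-1) * τ (i+1) (t+1) * τ (i+2) t * τ (i+1) t)) * key
  refine ⟨?_, ?_, ?_, ?_⟩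
  · rw [show z2 i t * y1 i t / (z1 i t + y1 i t) = z2 i t * y1 i t /
        ((α3 - α2) * (τ (i+1) t * τ (i+2) (t+1)) / (τ (i+1) (t+1) * τ (i+2) t)) from by
          rw [hsum], hy1, hz2, hy1, et]
    field_simp [hne]
  · rw [hy2, hsum, et]
  · rw [show z1 i t * z2 i t / (z1 i t + y1 i t) = z1 i t * z2 i t /
        ((α3 - α2) * (τ (i+1) t * τ (i+2) (t+1)) / (τ (i+1) (t+1) * τ (i+2) t)) from by
          rw [hsum], hz1, hz1, hz2, e2]
    field_simp [hne]
  · rw [hz2, hy2, e2]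
end

section
/- Let α_1, α_2, α_3 be real numbers with α_1 < α_2 < α_3, and set δ = (α_2−α_1)/(α_3−α_2). Suppose τ : ℤ² → ℝ_{>0} satisfies, for all (i,t) ∈ ℤ², the bilinear equation (1+δ)·τ(i,t−1)·τ(i+2,t+1) = τ(i+1,t+1)·τ(i+1,t−1) + δ·τ(i,t)·τ(i+2,t). Define, for all i,t ∈ ℤ: y_{i,1}^t = (α_3−α_1)·τ(i,t−2)·τ(i+1,t−1)/(τ(i,t−1)·τ(i+1,t−2)), y_{i,2}^t = (α_3−α_2)·τ(i+1,t−1)·τ(i+1,t−2)/(τ(i,t−2)·τ(i+2,t−1)), z_{i,1}^t = (α_3−α_1)·τ(i,t−1)·τ(i+1,t)/(τ(i,t)·τ(i+1,t−1)), z_{i,2}^t = (α_2−α_1)·τ(i+1,t−1)·τ(i,t−1)/(τ(i+1,t)·τ(i,t−2)). Then these quantities satisfy the φ(3,0) evolution equations for all i,t: y_{i,1}^{t+1} = z_{i,1}^t, y_{i,2}^{t+1} = y_{i,1}^t·y_{i,2}^t/(z_{i,2}^t+y_{i,2}^t), z_{i+1,1}^t = z_{i,2}^t+y_{i,2}^t,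 and z_{i+1,2}^t = y_{i,1}^t·z_{i,2}^t/(z_{i,2}^t+y_{i,2}^t). -/
/-- A solution of the bilinear equation gives a solution of `φ(3,0)` via the
tau-function substitution. -/
theorem stmt_7 (α1 α2 α3 : ℝ) (h12 : α1 < α2) (h23 : α2 < α3)
    (δ : ℝ) (hδ : δ = (α2 - α1) / (α3 - α2))
    (τ : ℤ → ℤ → ℝ) (hτ : ∀ i t : ℤ, 0 < τ i t)
    (hbil : ∀ i t : ℤ,
      (1 + δ) * (τ i (t - 1) * τ (i + 2) (t + 1)) =
        τ (i + 1) (t + 1) * τ (i + 1) (t - 1) + δ * (τ i t * τ (i + 2) t))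
    (y1 y2 z1 z2 : ℤ → ℤ → ℝ)
    (hy1 : ∀ i t : ℤ, y1 i t =
      (α3 - α1) * (τ i (t - 2) * τ (i + 1) (t - 1)) / (τ i (t - 1) * τ (i + 1) (t - 2)))
    (hy2 : ∀ i t : ℤ, y2 i t =
      (α3 - α2) * (τ (i + 1) (t - 1) * τ (i + 1) (t - 2)) / (τ i (t - 2) * τ (i + 2) (t - 1)))
    (hz1 : ∀ i t : ℤ, z1 i t =
      (α3 - α1) * (τ i (t - 1) * τ (i + 1) t) / (τ i t * τ (i + 1) (t - 1)))
    (hz2 : ∀ i t : ℤ, z2 i t =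
      (α2 - α1) * (τ (i + 1) (t - 1) * τ i (t - 1)) / (τ (i + 1) t * τ i (t - 2))) :
    ∀ i t : ℤ,
      y1 i (t + 1) = z1 i t ∧
      y2 i (t + 1) = y1 i t * y2 i t / (z2 i t + y2 i t) ∧
      z1 (i + 1) t = z2 i t + y2 i t ∧
      z2 (i + 1) t = y1 i t * z2 i t / (z2 i t + y2 i t) := by

  intro i t
  have P : ∀ i t : ℤ, τ i t ≠ 0 := fun i t => (hτ i t).ne'
  have hba : α3 - α2 ≠ 0 := by linarith
  have h31 : α3 - α1 ≠ 0 := by linarith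
  have h21 : α2 - α1 ≠ 0 := by linarith
  have hB := hbil i (t - 1)
  simp only [show t - 1 - 1 = t - 2 from by ring, show t - 1 + 1 = t from by ring] at hB
  rw [hδ] at hB
  have hB' : (α3 - α1) * (τ i (t - 2) * τ (i + 2) t) =
      (α3 - α2) * (τ (i + 1) t * τ (i + 1) (t - 2)) +
      (α2 - α1) * (τ i (t - 1) * τ (i + 2) (t - 1)) := by
    field_simp at hB
    linarith [hB]
  have key : z2 i t + y2 i t =
      (α3 - α1) * (τ (i + 1) (t - 1) * τ (i + 2) t) / (τ (i + 1) t * τ (i + 2) (t - 1)) := by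
    rw [hz2, hy2, div_add_div _ _ (mul_ne_zero (P _ _) (P _ _)) (mul_ne_zero (P _ _) (P _ _)),
      div_eq_div_iff
        (mul_ne_zero (mul_ne_zero (P _ _) (P _ _)) (mul_ne_zero (P _ _) (P _ _)))
        (mul_ne_zero (P _ _) (P _ _))]
    linear_combination (-(τ (i + 1) (t - 1) * τ i (t - 2) * τ (i + 1) t * τ (i + 2) (t - 1))) * hB'
  have hS : z2 i t + y2 i t ≠ 0 := by
    rw [key]
    exact ne_of_gt (div_pos (mul_pos (by linarith) (mul_pos (hτ _ _) (hτ _ _)))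
      (mul_pos (hτ _ _) (hτ _ _)))
  refine ⟨?_, ?_, ?_, ?_⟩
  · rw [hy1, hz1]
    simp only [show t + 1 - 2 = t - 1 from by ring, show t + 1 - 1 = t from by ring]
  · rw [eq_div_iff hS, key, hy2, hy1, hy2]
    simp only [show t + 1 - 2 = t - 1 from by ring, show t + 1 - 1 = t from by ring]
    field_simp [P]
  · rw [key, hz1]
    simp only [show i + 1 + 1 = i + 2 from by ring]
  · rw [eq_div_iff hS, key, hz2, hy1, hz2]
    simp only [show i + 1 + 1 = i + 2 from by ring]
    field_simp [P]
end

section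
/- Let K be a field with an additive valuation v : K → ℝ ∪ {∞}. Let n ≥ 2, let α_1,…,α_n ∈ K with v(α_i) = A_i, and suppose the indices can be ordered i_1,…,i_n so that A_{i_1} < A_{i_2} < ⋯ < A_{i_n}. Fix 1 ≤ p ≤ n−1 and let b, c ∈ K satisfy (b−α_1)(b−α_2)⋯(b−α_n) = (c−α_1)(c−α_2)⋯(c−α_n), v(b) = A_{i_p}, and v(c) = X_c with A_{i_p} < X_c < A_{i_{p+1}}. Then: v(b−α_{i_j}) = A_{i_j} for j = 1,…,p−1; v(b−α_{i_p}) = A_{i_p} + (n−p)·(X_c − A_{i_p}); v(b−α_{i_j}) = A_{i_p} for j = p+1,…,n; v(c−α_{i_j}) = A_{i_j} for j = 1,…,p; and v(c−α_{i_j}) = X_c for j = p+1,…,n. -/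
/-!
For every index except `i_p` the valuations `v(α_i)` differ from `v(b)` and from `v(c)`, so the
non-archimedean equality case gives `v(b - α_i)` and `v(c - α_i)` as a minimum. Taking valuations
of the two equal products, the sums of the `v(b - α_i)` and of the `v(c - α_i)` agree. The factors
with `j < p` contribute equally to both sums, the `n - p` factors with `j > p` contribute
`X_c - A_{i_p}` more to the second, and `v(c - α_{i_p}) = A_{i_p}`; the one remaining unknown
`v(b - α_{i_p})` must make up the difference.
-/

open Finset

namespace AddValuation

variable {R Γ : Type*} [LinearOrderedAddCommMonoidWithTop Γ]

def ofMulAdd [Ring R] [Nontrivial R] (v : R → Γ) (hv_top : ∀ x, v x = ⊤ ↔ x = 0)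
    (hv_mul : ∀ x y, v (x * y) = v x + v y) (hv_add : ∀ x y, min (v x) (v y) ≤ v (x + y)) :
    AddValuation R Γ :=
  of v ((hv_top 0).2 rfl)
    (by
      have h11 : v 1 + v 1 = v 1 + 0 := by rw [← hv_mul, one_mul, add_zero]
      exact (add_right_inj_of_ne_top ((hv_top 1).not.2 one_ne_zero)).1 h11)
    hv_add hv_mul

theorem map_prod [CommRing R] (v : AddValuation R Γ) {ι : Type*} (s : Finset ι) (f : ι → R) :
    v (∏ i ∈ s, f i) = ∑ i ∈ s, v (f i) := by
  induction s using Finset.cons_induction with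
  | empty => simp [map_one]
  | cons a s _ ih => rw [prod_cons, sum_cons, map_mul, ih]

end AddValuation

theorem WithTop.eq_add_sum_erase_of_sum_eq_sum {ι M : Type*} [Fintype ι] [DecidableEq ι]
    [AddCommMonoid M] [IsRightCancelAdd M] {f g d : ι → WithTop M} {i₀ : ι}
    (hg : ∀ i ≠ i₀, g i = f i + d i) (hf : ∀ i ≠ i₀, f i ≠ ⊤) (h : ∑ i, f i = ∑ i, g i) :
    f i₀ = g i₀ + ∑ i ∈ univ.erase i₀, d i := by
  have hS : ∑ i ∈ univ.erase i₀, f i ≠ ⊤ :=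
    WithTop.sum_ne_top.2 fun i hi => hf i (ne_of_mem_erase hi)
  refine WithTop.add_right_cancel hS ?_
  rw [add_sum_erase _ _ (mem_univ i₀), h, ← add_sum_erase _ _ (mem_univ i₀),
    sum_congr rfl fun i hi => hg i (ne_of_mem_erase hi), sum_add_distrib]
  ac_rfl

theorem apply_pivot_of_sum_eq_sum {n : ℕ} {f g : Fin n → WithTop ℝ} {a : Fin n → ℝ} {p : Fin n}
    {x : ℝ} (hsum : ∑ j, f j = ∑ j, g j)
    (hf_lt : ∀ j < p, f j = a j) (hf_gt : ∀ j, p < j → f j = a p)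
    (hg_le : ∀ j ≤ p, g j = a j) (hg_gt : ∀ j, p < j → g j = x) :
    f p = ↑(a p + ((n : ℝ) - (p : ℕ) - 1) * (x - a p)) := by
  let d : Fin n → WithTop ℝ := fun j => if p < j then ↑(x - a p) else 0
  have hgf : ∀ j ≠ p, g j = f j + d j := by
    intro j hj
    rcases hj.lt_or_gt with h | h
    · simp [d, hf_lt j h, hg_le j h.le, not_lt_of_gt h]
    · simp only [d, hf_gt j h, hg_gt j h, if_pos h, ← WithTop.coe_add, add_sub_cancel]
  have hfin : ∀ j ≠ p, f j ≠ ⊤ := by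
    intro j hj
    rcases hj.lt_or_gt with h | h
    · simp [hf_lt j h]
    · simp [hf_gt j h]
  have hcount : ((n - 1 - p : ℕ) : ℝ) = n - p - 1 := by
    have := p.isLt
    rw [Nat.sub_sub, Nat.cast_sub (by omega)]
    push_cast
    ring
  rw [WithTop.eq_add_sum_erase_of_sum_eq_sum hgf hfin hsum, hg_le p le_rfl,
    sum_erase _ (by simp [d]), ← sum_filter, filter_lt_eq_Ioi, sum_const, Fin.card_Ioi,
    ← WithTop.coe_nsmul, ← WithTop.coe_add, nsmul_eq_mul, hcount]

theorem stmt_11_general (K : Type*) [Field K] (v : K → WithTop ℝ)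
    (hv_top : ∀ x : K, v x = ⊤ ↔ x = 0)
    (hv_mul : ∀ x y : K, v (x * y) = v x + v y)
    (hv_add : ∀ x y : K, min (v x) (v y) ≤ v (x + y))
    (n : ℕ)
    (α : Fin n → K) (A : Fin n → ℝ)
    (hA : ∀ i : Fin n, v (α i) = ((A i : ℝ) : WithTop ℝ))
    (σ : Equiv.Perm (Fin n))
    (hord : StrictMono fun j : Fin n => A (σ j))
    (p : Fin n) (hp : (p : ℕ) + 1 < n)
    (b c : K) (Xc : ℝ)
    (hprod : ∏ i : Fin n, (b - α i) = ∏ i : Fin n, (c - α i))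
    (hvb : v b = ((A (σ p) : ℝ) : WithTop ℝ))
    (hvc : v c = ((Xc : ℝ) : WithTop ℝ))
    (hX1 : A (σ p) < Xc) (hX2 : Xc < A (σ ⟨(p : ℕ) + 1, hp⟩)) :
    (∀ j : Fin n, j < p → v (b - α (σ j)) = ((A (σ j) : ℝ) : WithTop ℝ)) ∧
    v (b - α (σ p)) =
      ((A (σ p) + ((n : ℝ) - (p : ℕ) - 1) * (Xc - A (σ p)) : ℝ) : WithTop ℝ) ∧
    (∀ j : Fin n, p < j → v (b - α (σ j)) = ((A (σ p) : ℝ) : WithTop ℝ)) ∧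
    (∀ j : Fin n, j ≤ p → v (c - α (σ j)) = ((A (σ j) : ℝ) : WithTop ℝ)) ∧
    (∀ j : Fin n, p < j → v (c - α (σ j)) = ((Xc : ℝ) : WithTop ℝ)) := by
  let w := AddValuation.ofMulAdd v hv_top hv_mul hv_add
  have hb_lt : ∀ j < p, v (b - α (σ j)) = A (σ j) := fun j hj =>
    (w.map_sub_eq_of_lt_right (show v _ < v _ by rw [hA, hvb]; exact_mod_cast hord hj)).trans
      (hA _)
  have hb_gt : ∀ j, p < j → v (b - α (σ j)) = A (σ p) := fun j hj =>
    (w.map_sub_eq_of_lt_left (show v _ < v _ by rw [hA, hvb]; exact_mod_cast hord hj)).trans hvb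
  have hc_le : ∀ j ≤ p, v (c - α (σ j)) = A (σ j) := fun j hj =>
    (w.map_sub_eq_of_lt_right (show v _ < v _ by
      rw [hA, hvc]; exact_mod_cast (hord.monotone hj).trans_lt hX1)).trans (hA _)
  have hc_gt : ∀ j, p < j → v (c - α (σ j)) = Xc := fun j hj =>
    (w.map_sub_eq_of_lt_left (show v _ < v _ by
      rw [hA, hvc]; exact_mod_cast hX2.trans_le (hord.monotone (Fin.mk_le_of_le_val hj)))).trans hvc
  have hsum : ∑ j, v (b - α (σ j)) = ∑ j, v (c - α (σ j)) := by
    have h := congrArg w hprod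
    rwa [← Equiv.prod_comp σ, ← Equiv.prod_comp σ (fun i => c - α i), w.map_prod, w.map_prod] at h
  exact ⟨hb_lt, apply_pivot_of_sum_eq_sum hsum hb_lt hb_gt hc_le hc_gt, hb_gt, hc_le, hc_gt⟩

/-- Valuations of `b - α_i` and `c - α_i` for two points `b`, `c` of the curve
`y = (x-α_1)⋯(x-α_n)` with equal `y`-values (Lemma 5.2 of the paper).
The indices are `0`-based: `σ j` plays the role of `i_{j+1}`, and `p : Fin n`
(with `p + 1 < n`) plays the role of the `1`-based index `p+1 ∈ {1,…,n-1}`;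
accordingly the coefficient `n - p` (`1`-based) appears as `n - p - 1`. -/
theorem stmt_11 (K : Type*) [Field K] (v : K → WithTop ℝ)
    (hv_top : ∀ x : K, v x = ⊤ ↔ x = 0)
    (hv_mul : ∀ x y : K, v (x * y) = v x + v y)
    (hv_add : ∀ x y : K, min (v x) (v y) ≤ v (x + y))
    (hv_eq : ∀ x y : K, v x ≠ v y → v (x + y) = min (v x) (v y))
    (n : ℕ) (hn : 2 ≤ n)
    (α : Fin n → K) (A : Fin n → ℝ)
    (hA : ∀ i : Fin n, v (α i) = ((A i : ℝ) : WithTop ℝ))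
    (σ : Equiv.Perm (Fin n))
    (hord : StrictMono fun j : Fin n => A (σ j))
    (p : Fin n) (hp : (p : ℕ) + 1 < n)
    (b c : K) (Xc : ℝ)
    (hprod : ∏ i : Fin n, (b - α i) = ∏ i : Fin n, (c - α i))
    (hvb : v b = ((A (σ p) : ℝ) : WithTop ℝ))
    (hvc : v c = ((Xc : ℝ) : WithTop ℝ))
    (hX1 : A (σ p) < Xc) (hX2 : Xc < A (σ ⟨(p : ℕ) + 1, hp⟩)) :
    (∀ j : Fin n, j < p → v (b - α (σ j)) = ((A (σ j) : ℝ) : WithTop ℝ)) ∧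
    v (b - α (σ p)) =
      ((A (σ p) + ((n : ℝ) - (p : ℕ) - 1) * (Xc - A (σ p)) : ℝ) : WithTop ℝ) ∧
    (∀ j : Fin n, p < j → v (b - α (σ j)) = ((A (σ p) : ℝ) : WithTop ℝ)) ∧
    (∀ j : Fin n, j ≤ p → v (c - α (σ j)) = ((A (σ j) : ℝ) : WithTop ℝ)) ∧
    (∀ j : Fin n, p < j → v (c - α (σ j)) = ((Xc : ℝ) : WithTop ℝ)) :=
  stmt_11_general K v hv_top hv_mul hv_add n α A hA σ hord p hp b c Xc hprod hvb hvc hX1 hX2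
end

section
/- Let n ≥ 3 be an integer. Let L be an integer, P an integer with P ≥ n−1, and R_1,…,R_{n−3} integers with R_j ≤ −1 for all j and P + Σ_{j=1}^{n−3} R_j ≥ 2. Define T_0(i,t) = min(0, L + i·P − t) and, for p = 1,…,n−3, T_p(i,t) = min(0, L + i·P − t + Σ_{j=p}^{n−3} R_j), and set T_{n−2} := T_0. Then for all (i,t) ∈ ℤ²: T_0(i,t−1) + T_1(i+2,t+1) = min( T_1(i+1,t+1) + T_0(i+1,t−1), 1 + T_0(i,t) + T_1(i+2,t) ); and for each p = 1,…,n−3: T_p(i+1,t−1) + T_{p+1}(i+2,t) = min( T_{p+1}(i+1,t) + T_p(i+2,t−1), 1 + T_p(i+1,t) + T_{p+1}(i+2,t−1) ). (This is the one-soliton solution of the tropical tau-function system for Φ(n,k).) -/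
/-!
Every `T_p` is a tropical one-soliton `min 0 (L + i P - t + c_p)` with phase `c_p` (with
`c_0 = c_{n-2} = 0` and `c_p = Σ_{j ≥ p} R_j` otherwise). After substituting, both bilinear
equations become the single piecewise-linear identity `min_zero_add_min_zero_eq` for shifts
`u, v ≥ 1`: `u = P + c_1 - 1, v = P + 1` for the first equation and `u = c_{p+1} - c_p = -R_p,
v = P + 1` for the others.
-/

open Finset

theorem min_zero_add_min_zero_eq (x u v : ℤ) (hu : 1 ≤ u) (hv : 1 ≤ v) :
    min 0 (x + 1) + min 0 (x + u + v - 1) =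
      min (min 0 (x + u) + min 0 (x + v)) (1 + min 0 x + min 0 (x + u + v)) := by
  omega

theorem sum_Icc_eq_add_sum_Icc_succ {M : Type*} [AddCommMonoid M] (f : ℕ → M) {a b : ℕ}
    (h : a ≤ b) : ∑ j ∈ Icc a b, f j = f a + ∑ j ∈ Icc (a + 1) b, f j := by
  rw [Icc_eq_cons_Ioc h, sum_cons, Icc_add_one_left_eq_Ioc]

def soliton (L P c i t : ℤ) : ℤ := min 0 (L + i * P - t + c)

section soliton

variable {L P : ℤ}

theorem soliton_bilinear_zero {c₀ c₁ : ℤ} (hP : 0 ≤ P) (hc : 2 ≤ P + c₁ - c₀) (i t : ℤ) :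
    soliton L P c₀ i (t - 1) + soliton L P c₁ (i + 2) (t + 1) =
      min (soliton L P c₁ (i + 1) (t + 1) + soliton L P c₀ (i + 1) (t - 1))
        (1 + soliton L P c₀ i t + soliton L P c₁ (i + 2) t) := by
  have key := min_zero_add_min_zero_eq (L + i * P - t + c₀) (P + c₁ - c₀ - 1) (P + 1)
    (by omega) (by omega)
  simp only [soliton]
  ring_nf at key ⊢
  exact key

theorem soliton_bilinear_succ {c c' : ℤ} (hP : 0 ≤ P) (hc : c < c') (i t : ℤ) :
    soliton L P c (i + 1) (t - 1) + soliton L P c' (i + 2) t =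
      min (soliton L P c' (i + 1) t + soliton L P c (i + 2) (t - 1))
        (1 + soliton L P c (i + 1) t + soliton L P c' (i + 2) (t - 1)) := by
  have key := min_zero_add_min_zero_eq (L + i * P - t + P + c) (c' - c) (P + 1)
    (by omega) (by omega)
  simp only [soliton]
  ring_nf at key ⊢
  exact key

end soliton

theorem eq_soliton_of_one_le {n : ℕ} {L P : ℤ} {R : ℕ → ℤ} {T : ℕ → ℤ → ℤ → ℤ}
    (hT0 : ∀ i t : ℤ, T 0 i t = min 0 (L + i * P - t))
    (hTp : ∀ p : ℕ, 1 ≤ p → p ≤ n - 3 → ∀ i t : ℤ,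
      T p i t = min 0 (L + i * P - t + ∑ j ∈ Icc p (n - 3), R j))
    (hTn : ∀ i t : ℤ, T (n - 2) i t = T 0 i t) {p : ℕ} (hp1 : 1 ≤ p) (hp2 : p ≤ n - 2) :
    T p = soliton L P (∑ j ∈ Icc p (n - 3), R j) := by
  funext i t
  rcases (show p ≤ n - 3 ∨ p = n - 2 by omega) with hp | rfl
  · exact hTp p hp1 hp i t
  · rw [hTn, hT0, Icc_eq_empty (by omega), sum_empty, soliton, add_zero]

/-- The one-soliton solution of the tropical tau-function system for `Φ(n,k)`
(Proposition 6.6 (i) of the paper). -/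
theorem stmt_13 (n : ℕ) (hn : 3 ≤ n)
    (L P : ℤ) (hP : (n : ℤ) - 1 ≤ P)
    (R : ℕ → ℤ) (hR : ∀ j : ℕ, 1 ≤ j → j ≤ n - 3 → R j ≤ -1)
    (hPR : 2 ≤ P + ∑ j ∈ Finset.Icc 1 (n - 3), R j)
    (T : ℕ → ℤ → ℤ → ℤ)
    (hT0 : ∀ i t : ℤ, T 0 i t = min 0 (L + i * P - t))
    (hTp : ∀ p : ℕ, 1 ≤ p → p ≤ n - 3 → ∀ i t : ℤ,
      T p i t = min 0 (L + i * P - t + ∑ j ∈ Finset.Icc p (n - 3), R j))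
    (hTn : ∀ i t : ℤ, T (n - 2) i t = T 0 i t) :
    (∀ i t : ℤ,
      T 0 i (t - 1) + T 1 (i + 2) (t + 1) =
        min (T 1 (i + 1) (t + 1) + T 0 (i + 1) (t - 1))
            (1 + T 0 i t + T 1 (i + 2) t)) ∧
    (∀ p : ℕ, 1 ≤ p → p ≤ n - 3 → ∀ i t : ℤ,
      T p (i + 1) (t - 1) + T (p + 1) (i + 2) t =
        min (T (p + 1) (i + 1) t + T p (i + 2) (t - 1))
            (1 + T p (i + 1) t + T (p + 1) (i + 2) (t - 1))) := by
  have hP0 : 0 ≤ P := by omega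
  have hT : ∀ p, 1 ≤ p → p ≤ n - 2 → T p = soliton L P (∑ j ∈ Icc p (n - 3), R j) :=
    fun p hp1 hp2 => eq_soliton_of_one_le hT0 hTp hTn hp1 hp2
  have hT0' : T 0 = soliton L P 0 := by
    funext i t
    rw [hT0, soliton, add_zero]
  refine ⟨fun i t => ?_, fun p hp1 hp2 i t => ?_⟩
  · rw [hT0', hT 1 le_rfl (by omega)]
    exact soliton_bilinear_zero hP0 (by omega) i t
  · rw [hT p hp1 (by omega), hT (p + 1) (by omega) (by omega)]
    exact soliton_bilinear_succ hP0
      (by linarith [sum_Icc_eq_add_sum_Icc_succ R hp2, hR p hp1 hp2]) i t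
end

section
/- Fix n ≥ 2 and nonnegative integers m, ℓ. Let B_ℓ = { x ∈ (ℤ_{≥0})^n : x_1 + ⋯ + x_n = ℓ }. Define the combinatorial R-matrix R on pairs (w, x) ∈ B_m × B_ℓ by R(w, x) = (x′, w′), where K_i = min over j = 0,1,…,n−1 of ( Σ_{p=1}^{j} w_{i−p} + Σ_{p=j+2}^{n} x_{i−p} ) (subscripts modulo n), x′_i = x_i + K_{i+1} − K_i, and w′_i = w_i + K_i − K_{i+1}. Let σ be the permutation of {1,…,n} with σ(1) = 1 and σ(i) = n+2−i for 2 ≤ i ≤ n, and let ρ be the map on pairs of n-tuples given by ρ(a, b) = ( (b_{σ(1)},…,b_{σ(n)}), (a_{σ(1)},…,a_{σ(n)}) ). Then R ∘ ρ = ρ ∘ R; that is, for all (x, w) ∈ B_ℓ × B_m, R(ρ(x, w)) = ρ(R(x, w)). -/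
/-- `K_i = min_{j=0,…,n−1} ( Σ_{p=1}^{j} w_{i−p} + Σ_{p=j+2}^{n} x_{i−p} )`,
subscripts modulo `n`. -/
def Kfun (n : ℕ) [NeZero n] (w x : ZMod n → ℤ) (i : ZMod n) : ℤ :=
  (Finset.range n).inf' (Finset.nonempty_range_iff.mpr (NeZero.ne n))
    (fun j => (∑ p ∈ Finset.Icc 1 j, w (i - ((p : ℕ) : ZMod n))) +
      ∑ p ∈ Finset.Icc (j + 2) n, x (i - ((p : ℕ) : ZMod n)))

/-- The combinatorial R-matrix: `R(w,x) = (x′,w′)` with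
`x′_i = x_i + K_{i+1} − K_i` and `w′_i = w_i + K_i − K_{i+1}`. -/
def Rmat (n : ℕ) [NeZero n] (wx : (ZMod n → ℤ) × (ZMod n → ℤ)) :
    (ZMod n → ℤ) × (ZMod n → ℤ) :=
  (fun i => wx.2 i + Kfun n wx.1 wx.2 (i + 1) - Kfun n wx.1 wx.2 i,
   fun i => wx.1 i + Kfun n wx.1 wx.2 i - Kfun n wx.1 wx.2 (i + 1))

/-- The map `ρ(a,b) = ((b∘σ),(a∘σ))`, where `σ(1) = 1` and `σ(i) = n+2−i`;
on `ZMod n` the permutation `σ` is `i ↦ 2 − i`. -/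
def rhoMat (n : ℕ) (ab : (ZMod n → ℤ) × (ZMod n → ℤ)) :
    (ZMod n → ℤ) × (ZMod n → ℤ) :=
  (fun i => ab.2 (2 - i), fun i => ab.1 (2 - i))

/-! Reindexing the minimum defining `K_i` by `j ↦ n - 1 - j` and both sums by
`p ↦ n + 1 - p` exchanges the roles of `w` and `x`, so that `K` computed from `ρ(x, w)`
at `i` equals `K` computed from `(x, w)` at `3 - i`. As `3 - (i + 1) = 2 - i`, this turns
`K_{i+1} - K_i` into `K_{2-i} - K_{3-i}`, which is the identity `R ∘ ρ = ρ ∘ R`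
entrywise. -/

lemma Finset.inf'_range_reflect {α : Type*} [SemilatticeInf α] (n : ℕ)
    (h : (Finset.range n).Nonempty) (f : ℕ → α) :
    (Finset.range n).inf' h (fun j => f (n - 1 - j)) = (Finset.range n).inf' h f := by
  have reflect_le (g : ℕ → α) :
      (Finset.range n).inf' h g ≤ (Finset.range n).inf' h (fun j => g (n - 1 - j)) :=
    Finset.le_inf' _ _ fun j hj =>
      Finset.inf'_le _ (Finset.mem_range.mpr (by have := Finset.mem_range.mp hj; omega))
  refine le_antisymm ?_ (reflect_le f)
  calc (Finset.range n).inf' h (fun j => f (n - 1 - j))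
      ≤ (Finset.range n).inf' h (fun j => f (n - 1 - (n - 1 - j))) := reflect_le _
    _ = (Finset.range n).inf' h f :=
      Finset.inf'_congr h rfl fun j hj => by
        rw [Nat.sub_sub_self (by have := Finset.mem_range.mp hj; omega)]

lemma ZMod.sum_Icc_sub_reflect {M : Type*} [AddCommMonoid M] (n : ℕ) (f : ZMod n → M)
    (c : ZMod n) {a b : ℕ} (ha : 1 ≤ a) (hb : b ≤ n) :
    ∑ p ∈ Finset.Icc a b, f (c - p) =
      ∑ p ∈ Finset.Icc (n + 1 - b) (n + 1 - a), f (c - 1 + p) := by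
  refine Finset.sum_nbij' (fun p => n + 1 - p) (fun p => n + 1 - p) ?_ ?_ ?_ ?_ ?_ <;>
    intro p hp <;> simp only [Finset.mem_Icc] at hp ⊢
  iterate 4 omega
  rw [Nat.cast_sub (by omega : p ≤ n + 1)]
  push_cast
  rw [ZMod.natCast_self]
  ring_nf

section Kfun

variable (n : ℕ) (x w : ZMod n → ℤ)

lemma Kfun_term_reflect (i : ZMod n) {j : ℕ} (hj : j < n) :
    (∑ p ∈ Finset.Icc 1 (n - 1 - j), w (2 - (i - p))) +
        ∑ p ∈ Finset.Icc (n - 1 - j + 2) n, x (2 - (i - p)) =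
      (∑ p ∈ Finset.Icc 1 j, x (3 - i - p)) + ∑ p ∈ Finset.Icc (j + 2) n, w (3 - i - p) := by
  rw [ZMod.sum_Icc_sub_reflect n w (3 - i) (by omega : 1 ≤ j + 2) le_rfl,
    ZMod.sum_Icc_sub_reflect n x (3 - i) le_rfl (by omega : j ≤ n),
    show n + 1 - (j + 2) = n - 1 - j by omega, show n + 1 - n = 1 by omega,
    show n + 1 - 1 = n by omega, show n - 1 - j + 2 = n + 1 - j by omega, add_comm]
  congr 1 <;> refine Finset.sum_congr rfl fun p _ => ?_ <;> ring_nf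

lemma Kfun_reflect [NeZero n] (i : ZMod n) :
    Kfun n (fun k => w (2 - k)) (fun k => x (2 - k)) i = Kfun n x w (3 - i) := by
  unfold Kfun
  rw [← Finset.inf'_range_reflect]
  exact Finset.inf'_congr _ rfl fun j hj => Kfun_term_reflect n x w i (Finset.mem_range.mp hj)

end Kfun

theorem stmt_15_general (n : ℕ) [NeZero n]
    (x w : ZMod n → ℤ) :
    Rmat n (rhoMat n (x, w)) = rhoMat n (Rmat n (x, w)) := by
  have h₁ (i : ZMod n) : 3 - (i + 1) = 2 - i := by ring
  have h₂ (i : ZMod n) : 2 - i + 1 = 3 - i := by ring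
  simp only [Rmat, rhoMat, Kfun_reflect, h₁, h₂]

/-- The combinatorial R-matrix commutes with `ρ`: `R ∘ ρ = ρ ∘ R`
(Lemma 7.2 of the paper). -/
theorem stmt_15 (n : ℕ) [NeZero n] (hn : 2 ≤ n) (m ℓ : ℕ)
    (x w : ZMod n → ℤ)
    (hx_nonneg : ∀ i : ZMod n, 0 ≤ x i) (hx_sum : ∑ i : ZMod n, x i = (ℓ : ℤ))
    (hw_nonneg : ∀ i : ZMod n, 0 ≤ w i) (hw_sum : ∑ i : ZMod n, w i = (m : ℤ)) :
    Rmat n (rhoMat n (x, w)) = rhoMat n (Rmat n (x, w)) :=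
  stmt_15_general n x w
end
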